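/- arXiv:1711.04750 — 7 statements merged into one kernel-verified Lean document; each statement's English description precedes it below -/
import Mathlib

section
/- For every integer k ≥ 2, every set system 𝒬 ⊆ 𝒫([k]) \ {[k]}, every d ∈ [0,1], and every δ > 0, there exists ε > 0 such that for all sufficiently large n, every n-vertex k-uniform hypergraph H that satisfies DISC_{𝒬,d}(ε) also satisfies WDISC_{𝒬,d}(δ). -/
open Finset
open scoped Classical

/-- `E⃗`: the set of all orderings of the edges of a `k`-uniform hypergraph
with vertex set `Fin n` and edge set `E`. -/
def edgeOrd (k : ℕ) {n : ℕ} (E : Finset (Finset (Fin n))) : Set (Fin k → Fin n) :=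
  {v | Function.Injective v ∧ Finset.image v Finset.univ ∈ E}

/-- The restriction `v_Q` of a `k`-tuple `v` to the coordinates in `Q`. -/
def tupleRestrict {k n : ℕ} (Q : Finset (Fin k)) (v : Fin k → Fin n) :
    {i // i ∈ Q} → Fin n :=
  fun i => v i.1

/-- `𝒦_k(𝒢)`: the ordered `k`-tuples with pairwise distinct entries supported by the
family `G` of `Q`-directed hypergraphs, for `Q` ranging over `𝒬`. -/
def supportedTuples {k n : ℕ} (𝒬 : Finset (Finset (Fin k)))
    (G : (Q : Finset (Fin k)) → Set ({i // i ∈ Q} → Fin n)) : Set (Fin k → Fin n) :=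
  {v | Function.Injective v ∧ ∀ Q ∈ 𝒬, tupleRestrict Q v ∈ G Q}

/-- The property `DISC_{𝒬,d}(ε)` of the `k`-uniform hypergraph on `Fin n` with edge set `E`. -/
def DISC (k n : ℕ) (𝒬 : Finset (Finset (Fin k))) (d ε : ℝ)
    (E : Finset (Finset (Fin n))) : Prop :=
  ∀ G : (Q : Finset (Fin k)) → Set ({i // i ∈ Q} → Fin n),
    |((edgeOrd k E ∩ supportedTuples 𝒬 G).ncard : ℝ) -
        d * ((supportedTuples 𝒬 G).ncard : ℝ)| ≤ ε * (n : ℝ) ^ k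

/-- The product `∏_{Q ∈ 𝒬} w_Q(v_Q)`, where a factor is set to `0` whenever the tuple `v_Q`
has repeated entries. -/
noncomputable def wProd {k n : ℕ} (𝒬 : Finset (Finset (Fin k)))
    (w : (Q : Finset (Fin k)) → (({i // i ∈ Q} → Fin n) → ℝ)) (v : Fin k → Fin n) : ℝ :=
  ∏ Q ∈ 𝒬, if Function.Injective (tupleRestrict Q v) then w Q (tupleRestrict Q v) else 0

/-- The property `WDISC_{𝒬,d}(ε)` of the `k`-uniform hypergraph on `Fin n` with edge set `E`. -/
def WDISC (k n : ℕ) (𝒬 : Finset (Finset (Fin k))) (d ε : ℝ)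
    (E : Finset (Finset (Fin n))) : Prop :=
  ∀ w : (Q : Finset (Fin k)) → (({i // i ∈ Q} → Fin n) → ℝ),
    (∀ Q y, -1 ≤ w Q y ∧ w Q y ≤ 1) →
    |∑ v : Fin k → Fin n,
        ((if v ∈ edgeOrd k E then (1 : ℝ) else 0) - d) * wProd 𝒬 w v| ≤ ε * (n : ℝ) ^ k

/-- `N_F(H)`: the number of labeled copies of the hypergraph `F = (VF, EF)` in the
hypergraph on `Fin n` with edge set `E`. -/
noncomputable def labeledCopies {n : ℕ} (VF : Type) [Fintype VF] [DecidableEq VF]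
    (EF : Finset (Finset VF)) (E : Finset (Finset (Fin n))) : ℕ :=
  Set.ncard {φ : VF → Fin n | Function.Injective φ ∧ ∀ f ∈ EF, Finset.image φ f ∈ E}

/-- The property `CL_{𝒬,d}(F,ε)` for `F = (VF, EF)`. -/
def CL {n : ℕ} (VF : Type) [Fintype VF] [DecidableEq VF]
    (EF : Finset (Finset VF)) (d ε : ℝ) (E : Finset (Finset (Fin n))) : Prop :=
  |(labeledCopies VF EF E : ℝ) - d ^ EF.card * (n : ℝ) ^ Fintype.card VF| ≤
    ε * (n : ℝ) ^ Fintype.card VF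

/-- The hypergraph `F = (VF, EF)` is `𝒬`-simple. -/
def QSimple {k : ℕ} (𝒬 : Finset (Finset (Fin k))) {VF : Type}
    (EF : Finset (Finset VF)) : Prop :=
  ∃ e : Fin EF.card → Finset VF,
    (∀ j, e j ∈ EF) ∧ (∀ f ∈ EF, ∃ j, e j = f) ∧
      ∀ j : Fin EF.card, ∃ x : Fin k → VF,
        Function.Injective x ∧ (∀ r, x r ∈ e j) ∧
          ∀ h : Fin EF.card, h < j →
            ∃ Q ∈ 𝒬, ∀ r : Fin k, x r ∈ e h ∧ x r ∈ e j → r ∈ Q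

/-- The vertex set of `M_𝒬`: the vertex class indexed by `i ∈ [k]` consists of all
functions from `{Q ∈ 𝒬 : i ∉ Q}` to `{0,1}` (this is the result of the successive
doubling operations `db_Q`, `Q ∈ 𝒬`, applied to a single edge `K_k^{(k)}`). -/
abbrev MVertex (k : ℕ) (𝒬 : Finset (Finset (Fin k))) : Type :=
  Σ i : Fin k, ({Q : Finset (Fin k) // Q ∈ 𝒬 ∧ i ∉ Q} → Bool)

/-- The vertex in class `i` of the edge of `M_𝒬` indexed by `a : 𝒬 → {0,1}`. -/
def Mvert {k : ℕ} (𝒬 : Finset (Finset (Fin k))) (a : {Q : Finset (Fin k) // Q ∈ 𝒬} → Bool)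
    (i : Fin k) : MVertex k 𝒬 :=
  ⟨i, fun Q => a ⟨Q.1, Q.2.1⟩⟩

/-- The edge of `M_𝒬` indexed by `a : 𝒬 → {0,1}`. -/
noncomputable def MEdge {k : ℕ} (𝒬 : Finset (Finset (Fin k))) (a : {Q : Finset (Fin k) // Q ∈ 𝒬} → Bool) :
    Finset (MVertex k 𝒬) :=
  Finset.image (Mvert 𝒬 a) Finset.univ

/-- The edge set of `M_𝒬`. -/
noncomputable def MEdges {k : ℕ} (𝒬 : Finset (Finset (Fin k))) : Finset (Finset (MVertex k 𝒬)) :=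
  Finset.image (MEdge 𝒬) Finset.univ

/-- The property `DEV_{𝒬,d}(ε)`:  the sum over all labeled copies `M` of `M_𝒬` in the
complete `k`-uniform hypergraph on `Fin n` of `∏_{f ∈ E(M)} (1_E(f) - d)` is at most
`ε n^{v(M_𝒬)}`. -/
def DEV (k n : ℕ) (𝒬 : Finset (Finset (Fin k))) (d ε : ℝ)
    (E : Finset (Finset (Fin n))) : Prop :=
  ∑ φ ∈ Finset.univ.filter (fun φ : MVertex k 𝒬 → Fin n => Function.Injective φ),
      ∏ f ∈ MEdges 𝒬, ((if Finset.image φ f ∈ E then (1 : ℝ) else 0) - d) ≤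
    ε * (n : ℝ) ^ Fintype.card (MVertex k 𝒬)

/-- `deg_𝒬(i)`: the number of sets in `𝒬` containing `i`. -/
def degQ {k : ℕ} (𝒬 : Finset (Finset (Fin k))) (i : Fin k) : ℕ :=
  (𝒬.filter fun Q => i ∈ Q).card

/-- `𝒜(𝒬)`: the antichain of inclusion-maximal elements of `𝒬`. -/
def maxElems {k : ℕ} (𝒬 : Finset (Finset (Fin k))) : Finset (Finset (Fin k)) :=
  𝒬.filter fun Q => ∀ Q' ∈ 𝒬, Q ⊆ Q' → Q = Q'

/-- The hypergraph `H^{(k)}(ℬ)`: a `k`-set `s ⊆ [n]` is an edge iff the number of `Q ∈ 𝒬`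
such that the restriction of the natural (increasing) ordering of `s` to the positions
in `Q` is an ordering of a member of `ℬ` is odd. -/
noncomputable def HkB (k i : ℕ) {n : ℕ} (𝒬 : Finset (Finset (Fin k))) (ℬ : Finset (Finset (Fin n))) :
    Finset (Finset (Fin n)) :=
  (Finset.powersetCard k (Finset.univ : Finset (Fin n))).filter fun s =>
    if h : s.card = k then
      Odd (𝒬.filter fun Q =>
        Finset.image (fun q : Fin k => (s.orderIsoOfFin h q : Fin n)) Q ∈ ℬ).card
    else False

/-- The `i`-th vertex class of the `Q`-doubling of a `k`-partite hypergraph with vertex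
classes `X`. -/
def dbClass {k : ℕ} (Q : Finset (Fin k)) (X : Fin k → Type) (i : Fin k) : Type :=
  if i ∈ Q then X i else X i × Bool

/-- The vertex of `db_Q(F)` in class `i` arising from the vertex `x` and `a ∈ {0,1}`. -/
def dbVertex {k : ℕ} (Q : Finset (Fin k)) (X : Fin k → Type) (i : Fin k)
    (x : X i) (a : Bool) : dbClass Q X i :=
  if h : i ∈ Q then cast (if_pos h).symm x else cast (if_neg h).symm (x, a)

/-- The edge set of the `Q`-doubling `db_Q(F)` of the `k`-partite `k`-uniform hypergraph
with vertex classes `X` and edge set `E` (edges are recorded as one vertex from each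
class). -/
def dbEdges {k : ℕ} (Q : Finset (Fin k)) (X : Fin k → Type) (E : Set (∀ i, X i)) :
    Set (∀ i, dbClass Q X i) :=
  {y | ∃ e ∈ E, ∃ a : Bool, ∀ i, y i = dbVertex Q X i (e i) a}

/-! Write each weight `w_Q(y) ∈ [-1, 1]` as the expectation of a random sign that is `+1` with
probability `(1 + w_Q(y)) / 2`, independently for all `Q` and `y`. For an injective tuple `v`,
`∏_Q w_Q(v_Q)` becomes an average, over random colourings `σ`, of the sign patterns
`∏_Q ±(σ_Q(v_Q))`; each sign pattern is a `±1` combination of the `2^|𝒬|` indicators of the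
tuples supported by the colour classes of `σ`, and DISC bounds every one of those. So the
injective tuples contribute at most `2^|𝒬| ε n^k`, and the at most `k² n^(k-1)` non-injective
ones contribute the rest. -/

section Coins

variable {Y : Type*} [Fintype Y] [DecidableEq Y]

noncomputable def coinWeight (w : ℝ) : Bool → ℝ
  | true => (1 + w) / 2
  | false => (1 - w) / 2

def boolSign : Bool → ℝ
  | true => 1
  | false => -1

lemma coinWeight_nonneg {w : ℝ} (h₁ : -1 ≤ w) (h₂ : w ≤ 1) (b : Bool) :
    0 ≤ coinWeight w b := by
  cases b <;> simp only [coinWeight] <;> linarith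

lemma abs_boolSign (b : Bool) : |boolSign b| = 1 := by
  cases b <;> simp [boolSign]

lemma sum_coinWeight (w : ℝ) : ∑ b, coinWeight w b = 1 := by
  simp only [Fintype.sum_bool, coinWeight]
  ring

lemma sum_coinWeight_mul_boolSign (w : ℝ) : ∑ b, coinWeight w b * boolSign b = w := by
  simp only [Fintype.sum_bool, coinWeight, boolSign]
  ring

lemma sum_prod_coinWeight (w : Y → ℝ) : ∑ τ : Y → Bool, ∏ y, coinWeight (w y) (τ y) = 1 := by
  rw [← Fintype.prod_sum]
  exact Finset.prod_eq_one fun y _ => sum_coinWeight (w y)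

lemma sum_prod_coinWeight_mul_boolSign (w : Y → ℝ) (y₀ : Y) :
    ∑ τ : Y → Bool, (∏ y, coinWeight (w y) (τ y)) * boolSign (τ y₀) = w y₀ := by
  have hfactor : ∀ τ : Y → Bool, (∏ y, coinWeight (w y) (τ y)) * boolSign (τ y₀) =
      ∏ y, coinWeight (w y) (τ y) * (if y = y₀ then boolSign (τ y) else 1) := by
    intro τ
    rw [Finset.prod_mul_distrib, Finset.prod_ite_eq' Finset.univ y₀, if_pos (Finset.mem_univ _)]
  have hsum : ∀ y, ∑ b, coinWeight (w y) b * (if y = y₀ then boolSign b else 1) =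
      if y = y₀ then w y else 1 := by
    intro y
    split_ifs
    · exact sum_coinWeight_mul_boolSign _
    · simpa using sum_coinWeight _
  simp_rw [hfactor]
  rw [← Fintype.prod_sum fun y b => coinWeight (w y) b * if y = y₀ then boolSign b else 1]
  simp_rw [hsum]
  rw [Finset.prod_ite_eq' Finset.univ y₀, if_pos (Finset.mem_univ _)]

end Coins

section CoinFamilies

variable {ι : Type*} [Fintype ι] {Y : ι → Type*} [∀ i, Fintype (Y i)]

noncomputable def coinProb (w : ∀ i, Y i → ℝ) (σ : ∀ i, Y i → Bool) : ℝ :=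
  ∏ i, ∏ t, coinWeight (w i t) (σ i t)

lemma coinProb_nonneg {w : ∀ i, Y i → ℝ} (hw : ∀ i t, -1 ≤ w i t ∧ w i t ≤ 1)
    (σ : ∀ i, Y i → Bool) : 0 ≤ coinProb w σ :=
  Finset.prod_nonneg fun i _ => Finset.prod_nonneg fun t _ =>
    coinWeight_nonneg (hw i t).1 (hw i t).2 _

lemma sum_coinProb [DecidableEq ι] [∀ i, DecidableEq (Y i)] (w : ∀ i, Y i → ℝ) :
    ∑ σ, coinProb w σ = 1 := by
  simp only [coinProb]
  rw [← Fintype.prod_sum fun i (τ : Y i → Bool) => ∏ t, coinWeight (w i t) (τ t)]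
  exact Finset.prod_eq_one fun i _ => sum_prod_coinWeight (w i)

lemma prod_eq_sum_coinProb_mul_boolSign [DecidableEq ι] [∀ i, DecidableEq (Y i)]
    (w : ∀ i, Y i → ℝ) (y : ∀ i, Y i) :
    ∏ i, w i (y i) = ∑ σ, coinProb w σ * ∏ i, boolSign (σ i (y i)) := by
  simp only [coinProb, ← Finset.prod_mul_distrib]
  rw [← Fintype.prod_sum fun i (τ : Y i → Bool) =>
    (∏ t, coinWeight (w i t) (τ t)) * boolSign (τ (y i))]
  exact Finset.prod_congr rfl fun i _ => (sum_prod_coinWeight_mul_boolSign (w i) (y i)).symm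

end CoinFamilies

section NonInjective

variable {α β : Type*} [Fintype α] [DecidableEq α] [Fintype β] [DecidableEq β]

lemma card_filter_apply_eq_mul_le {i j : α} (hij : i ≠ j) :
    #{v : α → β | v i = v j} * Fintype.card β ≤ Fintype.card β ^ Fintype.card α := by
  rw [← Fintype.card_fun, ← Finset.card_univ (α := β), ← Finset.card_product,
    ← Finset.card_univ]
  refine Finset.card_le_card_of_injOn (fun p => Function.update p.1 j p.2)
    (fun _ _ => Finset.mem_coe.2 (Finset.mem_univ _)) ?_
  rintro ⟨v, b⟩ hv ⟨v', b'⟩ hv' heq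
  simp only [Finset.coe_product, Set.mem_prod, Finset.mem_coe, Finset.mem_filter, true_and,
    Finset.mem_univ, and_true] at hv hv' heq
  have hb : b = b' := by simpa using congrFun heq j
  refine Prod.ext (funext fun x => ?_) hb
  by_cases hx : x = j
  · subst hx
    have := congrFun heq i
    simp only [Function.update_of_ne hij] at this
    change v x = v' x
    rw [← hv, ← hv', this]
  · simpa [Function.update_of_ne hx] using congrFun heq x

lemma card_not_injective_mul_le :
    #{v : α → β | ¬ Function.Injective v} * Fintype.card β ≤
      Fintype.card α ^ 2 * Fintype.card β ^ Fintype.card α := by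
  have hcover : ({v : α → β | ¬ Function.Injective v} : Finset (α → β)) ⊆
      (Finset.univ : Finset α).offDiag.biUnion fun p => {v : α → β | v p.1 = v p.2} := by
    intro v hv
    simp only [Finset.mem_filter, Finset.mem_univ, true_and, Function.Injective,
      not_forall] at hv
    obtain ⟨a, b, hab, hne⟩ := hv
    simpa using ⟨a, b, hne, hab⟩
  calc #{v : α → β | ¬ Function.Injective v} * Fintype.card β
      ≤ ∑ p ∈ (Finset.univ : Finset α).offDiag,
          #{v : α → β | v p.1 = v p.2} * Fintype.card β := by
        rw [← Finset.sum_mul]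
        exact Nat.mul_le_mul_right _ ((Finset.card_le_card hcover).trans Finset.card_biUnion_le)
    _ ≤ ∑ _p ∈ (Finset.univ : Finset α).offDiag, Fintype.card β ^ Fintype.card α :=
        Finset.sum_le_sum fun p hp => card_filter_apply_eq_mul_le (Finset.mem_offDiag.1 hp).2.2
    _ ≤ Fintype.card α ^ 2 * Fintype.card β ^ Fintype.card α := by
        rw [Finset.sum_const, smul_eq_mul, Finset.offDiag_card, Finset.card_univ, sq]
        exact Nat.mul_le_mul_right _ (Nat.sub_le _ _)

end NonInjective

section Discrepancy

variable {k n : ℕ} {𝒬 : Finset (Finset (Fin k))} {d ε : ℝ} {E : Finset (Finset (Fin n))}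

noncomputable def edgeBias (k : ℕ) {n : ℕ} (E : Finset (Finset (Fin n))) (d : ℝ)
    (v : Fin k → Fin n) : ℝ :=
  (if v ∈ edgeOrd k E then 1 else 0) - d

lemma abs_edgeBias_le_one (hd0 : 0 ≤ d) (hd1 : d ≤ 1) (v : Fin k → Fin n) :
    |edgeBias k E d v| ≤ 1 := by
  rw [edgeBias, abs_le]
  split_ifs <;> constructor <;> linarith

lemma DISC.abs_sum_edgeBias_mul_indicator_le (h : DISC k n 𝒬 d ε E)
    (G : (Q : Finset (Fin k)) → Set ({i // i ∈ Q} → Fin n)) :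
    |∑ v, edgeBias k E d v * (if v ∈ supportedTuples 𝒬 G then 1 else 0)| ≤ ε * (n : ℝ) ^ k := by
  have hncard : ∀ S : Set (Fin k → Fin n), (S.ncard : ℝ) = ∑ v, if v ∈ S then 1 else 0 := by
    intro S
    rw [Finset.sum_boole, ← Nat.card_coe_set_eq, Nat.card_eq_fintype_card,
      Fintype.card_subtype]
  convert h G using 2
  rw [hncard, hncard, Finset.mul_sum, ← Finset.sum_sub_distrib]
  refine Finset.sum_congr rfl fun v _ => ?_
  by_cases hE : v ∈ edgeOrd k E <;> by_cases hG : v ∈ supportedTuples 𝒬 G <;>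
    simp [edgeBias, hE, hG]

variable (𝒬) in
def levelSets (σ : (Q : 𝒬) → ({i // i ∈ Q.1} → Fin n) → Bool) (η : 𝒬 → Bool) :
    (Q : Finset (Fin k)) → Set ({i // i ∈ Q} → Fin n) :=
  fun Q => if hQ : Q ∈ 𝒬 then {y | σ ⟨Q, hQ⟩ y = η ⟨Q, hQ⟩} else Set.univ

lemma mem_supportedTuples_levelSets {σ : (Q : 𝒬) → ({i // i ∈ Q.1} → Fin n) → Bool}
    {η : 𝒬 → Bool} {v : Fin k → Fin n} (hv : Function.Injective v) :
    v ∈ supportedTuples 𝒬 (levelSets 𝒬 σ η) ↔ (fun Q => σ Q (tupleRestrict Q.1 v)) = η := by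
  simp only [supportedTuples, levelSets, Set.mem_ofPred_eq, hv, true_and, funext_iff]
  constructor
  · intro hall Q
    simpa [Q.2] using hall Q.1 Q.2
  · intro hall Q hQ
    simpa [hQ] using hall ⟨Q, hQ⟩

lemma ite_injective_prod_boolSign_eq_sum (σ : (Q : 𝒬) → ({i // i ∈ Q.1} → Fin n) → Bool)
    (v : Fin k → Fin n) :
    (if Function.Injective v then ∏ Q : 𝒬, boolSign (σ Q (tupleRestrict Q.1 v)) else 0) =
      ∑ η : 𝒬 → Bool, (∏ Q, boolSign (η Q)) *
        (if v ∈ supportedTuples 𝒬 (levelSets 𝒬 σ η) then 1 else 0) := by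
  split_ifs with hv
  · simp_rw [mem_supportedTuples_levelSets hv, mul_ite, mul_one, mul_zero,
      Finset.sum_ite_eq, Finset.mem_univ, if_true]
  · simp [supportedTuples, hv]

lemma DISC.abs_sum_edgeBias_mul_boolSign_le (h : DISC k n 𝒬 d ε E)
    (σ : (Q : 𝒬) → ({i // i ∈ Q.1} → Fin n) → Bool) :
    |∑ v, edgeBias k E d v *
        (if Function.Injective v then ∏ Q : 𝒬, boolSign (σ Q (tupleRestrict Q.1 v)) else 0)| ≤
      2 ^ 𝒬.card * (ε * (n : ℝ) ^ k) := by
  simp_rw [ite_injective_prod_boolSign_eq_sum, Finset.mul_sum]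
  rw [Finset.sum_comm]
  calc _ ≤ ∑ η : 𝒬 → Bool, |∑ v, edgeBias k E d v * ((∏ Q, boolSign (η Q)) *
          (if v ∈ supportedTuples 𝒬 (levelSets 𝒬 σ η) then 1 else 0))| :=
        Finset.abs_sum_le_sum_abs _ _
    _ ≤ ∑ _η : 𝒬 → Bool, ε * (n : ℝ) ^ k := by
        refine Finset.sum_le_sum fun η _ => ?_
        simp_rw [mul_left_comm (edgeBias k E d _), ← Finset.mul_sum, abs_mul,
          Finset.abs_prod, abs_boolSign, Finset.prod_const_one, one_mul]
        exact h.abs_sum_edgeBias_mul_indicator_le _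
    _ = 2 ^ 𝒬.card * (ε * (n : ℝ) ^ k) := by
        simp

lemma wProd_eq_sum_coinProb (w : (Q : Finset (Fin k)) → (({i // i ∈ Q} → Fin n) → ℝ))
    {v : Fin k → Fin n} (hv : Function.Injective v) :
    wProd 𝒬 w v = ∑ σ, coinProb (fun Q : 𝒬 => w Q.1) σ *
      ∏ Q : 𝒬, boolSign (σ Q (tupleRestrict Q.1 v)) := by
  have hrestrict : ∀ Q, Function.Injective (tupleRestrict Q v) :=
    fun Q _ _ hxy => Subtype.ext (hv hxy)
  rw [wProd, ← prod_eq_sum_coinProb_mul_boolSign, ← Finset.prod_coe_sort 𝒬]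
  simp only [hrestrict, if_true]

lemma DISC.abs_sum_edgeBias_mul_wProd_injective_le (h : DISC k n 𝒬 d ε E)
    {w : (Q : Finset (Fin k)) → (({i // i ∈ Q} → Fin n) → ℝ)}
    (hw : ∀ Q y, -1 ≤ w Q y ∧ w Q y ≤ 1) :
    |∑ v, edgeBias k E d v * (if Function.Injective v then wProd 𝒬 w v else 0)| ≤
      2 ^ 𝒬.card * (ε * (n : ℝ) ^ k) := by
  set p := coinProb fun Q : 𝒬 => w Q.1
  have hmix : ∀ v, (if Function.Injective v then wProd 𝒬 w v else 0) = ∑ σ, p σ *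
      (if Function.Injective v then ∏ Q : 𝒬, boolSign (σ Q (tupleRestrict Q.1 v)) else 0) := by
    intro v
    split_ifs with hv
    · exact wProd_eq_sum_coinProb w hv
    · simp
  have hp : ∀ σ, 0 ≤ p σ := coinProb_nonneg fun Q y => hw Q.1 y
  simp_rw [hmix, Finset.mul_sum, mul_left_comm (edgeBias k E d _)]
  rw [Finset.sum_comm]
  simp_rw [← Finset.mul_sum]
  calc _ ≤ ∑ σ, |p σ * ∑ v, edgeBias k E d v *
          (if Function.Injective v then ∏ Q : 𝒬, boolSign (σ Q (tupleRestrict Q.1 v)) else 0)| :=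
        Finset.abs_sum_le_sum_abs _ _
    _ ≤ ∑ σ, p σ * (2 ^ 𝒬.card * (ε * (n : ℝ) ^ k)) := by
        refine Finset.sum_le_sum fun σ _ => ?_
        rw [abs_mul, abs_of_nonneg (hp σ)]
        exact mul_le_mul_of_nonneg_left (h.abs_sum_edgeBias_mul_boolSign_le σ) (hp σ)
    _ = 2 ^ 𝒬.card * (ε * (n : ℝ) ^ k) := by
        rw [← Finset.sum_mul, sum_coinProb, one_mul]

lemma abs_wProd_le_one {w : (Q : Finset (Fin k)) → (({i // i ∈ Q} → Fin n) → ℝ)}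
    (hw : ∀ Q y, -1 ≤ w Q y ∧ w Q y ≤ 1) (v : Fin k → Fin n) : |wProd 𝒬 w v| ≤ 1 := by
  rw [wProd, Finset.abs_prod]
  refine Finset.prod_le_one (fun _ _ => abs_nonneg _) fun Q _ => ?_
  split_ifs
  · exact abs_le.2 (hw Q _)
  · simp

lemma abs_sum_edgeBias_mul_wProd_not_injective_le (hd0 : 0 ≤ d) (hd1 : d ≤ 1)
    {w : (Q : Finset (Fin k)) → (({i // i ∈ Q} → Fin n) → ℝ)}
    (hw : ∀ Q y, -1 ≤ w Q y ∧ w Q y ≤ 1) :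
    |∑ v, edgeBias k E d v * (if Function.Injective v then 0 else wProd 𝒬 w v)| ≤
      #{v : Fin k → Fin n | ¬ Function.Injective v} := by
  rw [Finset.card_filter, Nat.cast_sum]
  refine (Finset.abs_sum_le_sum_abs _ _).trans (Finset.sum_le_sum fun v _ => ?_)
  rw [abs_mul]
  split_ifs
  · simp
  · simpa using
      mul_le_one₀ (abs_edgeBias_le_one hd0 hd1 v) (abs_nonneg _) (abs_wProd_le_one hw v)

lemma WDISC.mono {ε' : ℝ} (h : WDISC k n 𝒬 d ε E) (hε : ε ≤ ε') : WDISC k n 𝒬 d ε' E :=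
  fun w hw => (h w hw).trans (by gcongr)

theorem DISC.wdisc (hd0 : 0 ≤ d) (hd1 : d ≤ 1) (hn : 0 < n) (h : DISC k n 𝒬 d ε E) :
    WDISC k n 𝒬 d (2 ^ 𝒬.card * ε + k ^ 2 / n) E := by
  intro w hw
  have hsplit : ∑ v, edgeBias k E d v * wProd 𝒬 w v =
      ∑ v, edgeBias k E d v * (if Function.Injective v then wProd 𝒬 w v else 0) +
        ∑ v, edgeBias k E d v * (if Function.Injective v then 0 else wProd 𝒬 w v) := by
    rw [← Finset.sum_add_distrib]
    refine Finset.sum_congr rfl fun v _ => ?_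
    split_ifs <;> simp
  have hcount : (#{v : Fin k → Fin n | ¬ Function.Injective v} : ℝ) ≤ k ^ 2 / n * n ^ k := by
    have hnat := card_not_injective_mul_le (α := Fin k) (β := Fin n)
    simp only [Fintype.card_fin] at hnat
    rw [div_mul_eq_mul_div, le_div_iff₀ (by exact_mod_cast hn)]
    exact_mod_cast hnat
  change |∑ v, edgeBias k E d v * wProd 𝒬 w v| ≤ _
  rw [hsplit]
  calc _ ≤ _ := abs_add_le _ _
    _ ≤ 2 ^ 𝒬.card * (ε * (n : ℝ) ^ k) + k ^ 2 / n * n ^ k :=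
        add_le_add (h.abs_sum_edgeBias_mul_wProd_injective_le hw)
          ((abs_sum_edgeBias_mul_wProd_not_injective_le hd0 hd1 hw).trans hcount)
    _ = _ := by ring

end Discrepancy

theorem disc_implies_wdisc_general (k : ℕ) (𝒬 : Finset (Finset (Fin k)))
    (d : ℝ) (hd0 : 0 ≤ d) (hd1 : d ≤ 1) (δ : ℝ) (hδ : 0 < δ) :
    ∃ ε > (0 : ℝ), ∃ n₀ : ℕ, ∀ n ≥ n₀, ∀ E : Finset (Finset (Fin n)),
      (∀ e ∈ E, e.card = k) → DISC k n 𝒬 d ε E → WDISC k n 𝒬 d δ E := by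
  refine ⟨δ / (2 * 2 ^ 𝒬.card), by positivity, ⌈2 * k ^ 2 / δ⌉₊ + 1, fun n hn E _ hdisc => ?_⟩
  have hn_pos : (0 : ℝ) < n := by exact_mod_cast (Nat.succ_pos _).trans_le hn
  have hk_small : (k : ℝ) ^ 2 / n ≤ δ / 2 := by
    have hn_large : 2 * (k : ℝ) ^ 2 / δ ≤ n :=
      (Nat.le_ceil _).trans (by exact_mod_cast (Nat.le_succ _).trans hn)
    rw [div_le_iff₀ hδ] at hn_large
    rw [div_le_iff₀ hn_pos]
    linarith
  refine (hdisc.wdisc hd0 hd1 (by exact_mod_cast hn_pos)).mono ?_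
  have hdisc_part : 2 ^ 𝒬.card * (δ / (2 * 2 ^ 𝒬.card)) = δ / 2 := by
    field_simp
  linarith

/-- `DISC ⟹ WDISC`. -/
theorem disc_implies_wdisc (k : ℕ) (hk : 2 ≤ k) (𝒬 : Finset (Finset (Fin k)))
    (h𝒬 : Finset.univ ∉ 𝒬) (d : ℝ) (hd0 : 0 ≤ d) (hd1 : d ≤ 1) (δ : ℝ) (hδ : 0 < δ) :
    ∃ ε > (0 : ℝ), ∃ n₀ : ℕ, ∀ n ≥ n₀, ∀ E : Finset (Finset (Fin n)),
      (∀ e ∈ E, e.card = k) → DISC k n 𝒬 d ε E → WDISC k n 𝒬 d δ E :=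
  disc_implies_wdisc_general k 𝒬 d hd0 hd1 δ hδ
end

section
/- For every integer k ≥ 2, every set system 𝒬 ⊆ 𝒫([k]) \ {[k]}, every d ∈ [0,1], every 𝒬-simple k-uniform hypergraph F, and every δ > 0, there exists ε > 0 such that for all sufficiently large n, every n-vertex k-uniform hypergraph H that satisfies WDISC_{𝒬,d}(ε) also satisfies CL_{𝒬,d}(F,δ). -/
open Finset
open scoped Classical

/-!
Order the edges of `F` as in the definition of `𝒬`-simplicity and count the maps
`V(F) → [n]` that send the first `i` edges onto edges of `H`; non-injective maps only contribute
`O(n^{v(F)-1})`. Adding the `(i+1)`-st edge multiplies this count by `d` up to an error: once the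
vertices outside the new edge are fixed, each earlier edge meets it inside the positions of some
`Q ∈ 𝒬`, so the earlier edges form an ensemble of `Q`-weights on the ordered new edge and `WDISC`
bounds the error on every such fibre by `ε n^k`. Iterating over the edges gives
`|N_F(H) - d^{e(F)} n^{v(F)}| ≤ e(F) ε n^{v(F)} + O(n^{v(F)-1})`.
-/

open Function

section NonInjective

variable {α β : Type*} [Fintype α] [DecidableEq α] [Fintype β] [DecidableEq β]

lemma card_filter_apply_eq_apply_le {a b : α} (hab : a ≠ b) :
    #{f : α → β | f a = f b} ≤ Fintype.card β ^ (Fintype.card α - 1) := by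
  calc #{f : α → β | f a = f b} ≤ Fintype.card ({x // x ≠ b} → β) := by
        refine card_le_card_of_injOn (fun f x => f x.1) (fun _ _ => mem_univ _) ?_
        intro f hf g hg hfg
        simp only [coe_filter, mem_univ, true_and, Set.mem_ofPred_eq] at hf hg
        funext x
        by_cases hx : x = b
        · subst hx
          rw [← hf, ← hg]
          exact congrFun hfg ⟨a, hab⟩
        · exact congrFun hfg ⟨x, hx⟩
    _ = _ := by simp [Fintype.card_subtype_compl]

lemma card_filter_not_injective_le :
    #{f : α → β | ¬ Injective f} ≤ Fintype.card α ^ 2 * Fintype.card β ^ (Fintype.card α - 1) := by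
  have hsub : ({f : α → β | ¬ Injective f} : Finset _) ⊆
      (univ : Finset α).offDiag.biUnion fun p => {f : α → β | f p.1 = f p.2} := by
    intro f hf
    simp only [Injective, not_forall, mem_filter, mem_univ, true_and] at hf
    obtain ⟨a, b, hab, hne⟩ := hf
    exact mem_biUnion.2 ⟨(a, b), by simpa using hne, by simpa using hab⟩
  calc _ ≤ ∑ p ∈ (univ : Finset α).offDiag, #{f : α → β | f p.1 = f p.2} :=
        (card_le_card hsub).trans card_biUnion_le
    _ ≤ ∑ _p ∈ (univ : Finset α).offDiag, Fintype.card β ^ (Fintype.card α - 1) :=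
        sum_le_sum fun p hp => card_filter_apply_eq_apply_le (mem_offDiag.1 hp).2.2
    _ ≤ _ := by
        rw [sum_const, smul_eq_mul, offDiag_card, card_univ, sq]
        gcongr
        exact Nat.sub_le _ _

lemma abs_sum_sub_sum_le_of_eq_of_injective {F G : (α → β) → ℝ}
    (heq : ∀ f, Injective f → F f = G f) (hle : ∀ f, |F f - G f| ≤ 1) :
    |∑ f, F f - ∑ f, G f| ≤ Fintype.card α ^ 2 * Fintype.card β ^ (Fintype.card α - 1) := by
  rw [← sum_sub_distrib]
  calc |∑ f, (F f - G f)| ≤ ∑ f : α → β, if ¬ Injective f then (1 : ℝ) else 0 := by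
        refine (abs_sum_le_sum_abs _ _).trans (sum_le_sum fun f _ => ?_)
        by_cases hf : Injective f
        · simp [hf, heq f hf]
        · simpa [hf] using hle f
    _ ≤ _ := by
        rw [sum_boole]
        exact_mod_cast card_filter_not_injective_le

end NonInjective

lemma abs_sub_pow_mul_le_of_abs_sub_mul_le {S : ℕ → ℝ} {d B : ℝ} (hd0 : 0 ≤ d) (hd1 : d ≤ 1)
    {m : ℕ} (hS : ∀ i < m, |S (i + 1) - d * S i| ≤ B) : |S m - d ^ m * S 0| ≤ m * B := by
  induction m with
  | zero => simp
  | succ m ih =>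
    have hB := hS m m.lt_succ_self
    have ih := ih fun i hi => hS i (hi.trans m.lt_succ_self)
    have hdih : |d * (S m - d ^ m * S 0)| ≤ m * B := by
      rw [abs_mul, abs_of_nonneg hd0]
      nlinarith [abs_nonneg (S m - d ^ m * S 0)]
    calc |S (m + 1) - d ^ (m + 1) * S 0|
        = |(S (m + 1) - d * S m) + d * (S m - d ^ m * S 0)| := by ring_nf
      _ ≤ B + m * B := (abs_add_le _ _).trans (add_le_add hB hdih)
      _ = (m + 1 : ℕ) * B := by push_cast; ring

section EdgeIndicator

variable {n : ℕ} (E : Finset (Finset (Fin n))) {V : Type*}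

noncomputable def edgeIndicator (φ : V → Fin n) (f : Finset V) : ℝ :=
  if Set.InjOn φ f ∧ f.image φ ∈ E then 1 else 0

variable {E}

lemma edgeIndicator_nonneg (φ : V → Fin n) (f : Finset V) : 0 ≤ edgeIndicator E φ f := by
  unfold edgeIndicator; split_ifs <;> norm_num

lemma abs_prod_edgeIndicator_le_one {ι : Type*} (s : Finset ι) (φ : V → Fin n)
    (g : ι → Finset V) : |∏ h ∈ s, edgeIndicator E φ (g h)| ≤ 1 := by
  rw [abs_of_nonneg (prod_nonneg fun h _ => edgeIndicator_nonneg φ (g h))]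
  exact prod_le_one (fun h _ => edgeIndicator_nonneg φ (g h))
    fun h _ => by unfold edgeIndicator; split_ifs <;> norm_num

lemma edgeIndicator_congr {φ φ' : V → Fin n} {f : Finset V} (h : Set.EqOn φ φ' f) :
    edgeIndicator E φ f = edgeIndicator E φ' f := by
  simp only [edgeIndicator, h.injOn_iff, image_congr h]

lemma edgeIndicator_of_injective {φ : V → Fin n} (hφ : Injective φ) (f : Finset V) :
    edgeIndicator E φ f = if f.image φ ∈ E then 1 else 0 := by
  simp [edgeIndicator, hφ.injOn]

lemma edgeIndicator_image_univ [DecidableEq V] {k : ℕ} {x : Fin k → V} (hx : Injective x)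
    (φ : V → Fin n) :
    edgeIndicator E φ (univ.image x) = if φ ∘ x ∈ edgeOrd k E then 1 else 0 := by
  have hinj : Set.InjOn φ (Set.range x) ↔ Injective (φ ∘ x) :=
    ⟨fun h a b hab => hx (h (Set.mem_range_self a) (Set.mem_range_self b) hab),
      Injective.injOn_range⟩
  simp only [edgeIndicator, edgeOrd, image_image, coe_image, coe_univ, Set.image_univ, hinj,
    Set.mem_ofPred_eq]
  congr

end EdgeIndicator

lemma wProd_eq_prod_of_forall_injective {k n : ℕ} {𝒬 : Finset (Finset (Fin k))}
    {w : (Q : Finset (Fin k)) → (({i // i ∈ Q} → Fin n) → ℝ)} {v : Fin k → Fin n}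
    (hv : ∀ Q ∈ 𝒬, Injective (tupleRestrict Q v)) :
    wProd 𝒬 w v = ∏ Q ∈ 𝒬, w Q (tupleRestrict Q v) :=
  prod_congr rfl fun Q hQ => if_pos (hv Q hQ)

/-- `WDISC` without the convention that weights vanish on tuples with repeated entries. -/
lemma WDISC.abs_sum_mul_prod_le {k n : ℕ} {𝒬 : Finset (Finset (Fin k))} {d ε : ℝ}
    {E : Finset (Finset (Fin n))} (hW : WDISC k n 𝒬 d ε E) (hd0 : 0 ≤ d) (hd1 : d ≤ 1)
    (w : (Q : Finset (Fin k)) → (({i // i ∈ Q} → Fin n) → ℝ)) (hw : ∀ Q y, |w Q y| ≤ 1) :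
    |∑ v : Fin k → Fin n,
        ((if v ∈ edgeOrd k E then (1 : ℝ) else 0) - d) * ∏ Q ∈ 𝒬, w Q (tupleRestrict Q v)| ≤
      ε * n ^ k + k ^ 2 * n ^ (k - 1) := by
  set ind : (Fin k → Fin n) → ℝ := fun v => if v ∈ edgeOrd k E then 1 else 0
  have hclose := abs_sum_sub_sum_le_of_eq_of_injective
    (F := fun v => (ind v - d) * ∏ Q ∈ 𝒬, w Q (tupleRestrict Q v))
    (G := fun v => (ind v - d) * wProd 𝒬 w v) ?_ ?_
  · simp only [Fintype.card_fin] at hclose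
    calc _ = |∑ v, (ind v - d) * wProd 𝒬 w v +
          (∑ v, (ind v - d) * ∏ Q ∈ 𝒬, w Q (tupleRestrict Q v) -
            ∑ v, (ind v - d) * wProd 𝒬 w v)| := by
          rw [add_sub_cancel]
      _ ≤ _ := (abs_add_le _ _).trans (add_le_add (hW w fun Q y => abs_le.1 (hw Q y)) hclose)
  · intro v hv
    rw [wProd_eq_prod_of_forall_injective fun Q _ => hv.comp Subtype.val_injective]
  · intro v
    by_cases hv : Injective v
    · rw [wProd_eq_prod_of_forall_injective fun Q _ => hv.comp Subtype.val_injective, sub_self,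
        abs_zero]
      exact zero_le_one
    have hind : ind v = 0 := if_neg fun h => hv h.1
    have hprod : |∏ Q ∈ 𝒬, w Q (tupleRestrict Q v)| ≤ 1 := by
      rw [abs_prod]
      exact prod_le_one (fun _ _ => abs_nonneg _) fun Q _ => hw Q _
    have hdiff : |∏ Q ∈ 𝒬, w Q (tupleRestrict Q v) - wProd 𝒬 w v| ≤ 1 := by
      by_cases hall : ∀ Q ∈ 𝒬, Injective (tupleRestrict Q v)
      · rw [wProd_eq_prod_of_forall_injective hall, sub_self, abs_zero]
        exact zero_le_one
      · push Not at hall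
        obtain ⟨Q, hQ, hQv⟩ := hall
        rwa [show wProd 𝒬 w v = 0 from prod_eq_zero hQ (if_neg hQv), sub_zero]
    rw [← mul_sub, abs_mul, hind, zero_sub, abs_neg, abs_of_nonneg hd0]
    nlinarith [abs_nonneg (∏ Q ∈ 𝒬, w Q (tupleRestrict Q v) - wProd 𝒬 w v)]

section SplitAlong

variable {k : ℕ} {V : Type*} {x : Fin k → V} (hx : Injective x) (α : Type*)

noncomputable def splitAlong : (V → α) ≃ (Fin k → α) × ({u // u ∉ Set.range x} → α) :=
  (Equiv.piEquivPiSubtypeProd (· ∈ Set.range x) fun _ => α).trans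
    ((Equiv.arrowCongr (Equiv.ofInjective x hx).symm (Equiv.refl α)).prodCongr (Equiv.refl _))

variable {α}

lemma splitAlong_symm_apply_apply (v : Fin k → α) (ψ : {u // u ∉ Set.range x} → α) (r : Fin k) :
    (splitAlong hx α).symm (v, ψ) (x r) = v r := by
  simp [splitAlong, Equiv.piEquivPiSubtypeProd_symm_apply]

lemma splitAlong_symm_eqOn {v v' : Fin k → α} (ψ : {u // u ∉ Set.range x} → α) {s : Set V}
    (h : ∀ r, x r ∈ s → v r = v' r) :
    Set.EqOn ((splitAlong hx α).symm (v, ψ)) ((splitAlong hx α).symm (v', ψ)) s := by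
  intro u hu
  by_cases hux : u ∈ Set.range x
  · obtain ⟨r, rfl⟩ := hux
    rw [splitAlong_symm_apply_apply, splitAlong_symm_apply_apply, h r hu]
  · simp [splitAlong, Equiv.piEquivPiSubtypeProd_symm_apply, hux]

end SplitAlong

lemma card_fun_compl_range {k n : ℕ} {V : Type*} [Fintype V] [DecidableEq V] {x : Fin k → V}
    (hx : Injective x) :
    Fintype.card ({u // u ∉ Set.range x} → Fin n) = n ^ (Fintype.card V - k) := by
  rw [Fintype.card_fun, Fintype.card_fin, Fintype.card_subtype_compl,
    Set.card_range_of_injective hx, Fintype.card_fin]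

lemma pow_sub_mul_add_le {k v n : ℕ} (hkv : k ≤ v) (ε : ℝ) :
    (n : ℝ) ^ (v - k) * (ε * n ^ k + k ^ 2 * n ^ (k - 1)) ≤ ε * n ^ v + v ^ 2 * n ^ (v - 1) := by
  rcases Nat.eq_zero_or_pos k with rfl | hk
  · simp only [Nat.sub_zero, pow_zero, CharP.cast_eq_zero]
    nlinarith [show (0 : ℝ) ≤ v ^ 2 * n ^ (v - 1) by positivity]
  · have hpow : ∀ j ≤ k, (n : ℝ) ^ (v - k) * n ^ j = n ^ (v - (k - j)) := fun j hj => by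
      rw [← pow_add]; congr 1; omega
    rw [mul_add, mul_left_comm, hpow k le_rfl, mul_left_comm, hpow (k - 1) (by omega),
      Nat.sub_self, Nat.sub_zero, show k - (k - 1) = 1 by omega]
    gcongr

section OneEdge

variable {k n : ℕ} [NeZero n] {𝒬 : Finset (Finset (Fin k))} {d ε : ℝ}
  {E : Finset (Finset (Fin n))} {V : Type*} [DecidableEq V] {ι : Type*}

lemma WDISC.abs_sum_splitAlong_symm_le (hW : WDISC k n 𝒬 d ε E) (hd0 : 0 ≤ d) (hd1 : d ≤ 1)
    (s : Finset ι) (g : ι → Finset V) {x : Fin k → V} (hx : Injective x)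
    (hg : ∀ h ∈ s, ∃ Q ∈ 𝒬, ∀ r, x r ∈ g h → r ∈ Q) (ψ : {u // u ∉ Set.range x} → Fin n) :
    |∑ v : Fin k → Fin n,
        (∏ h ∈ s, edgeIndicator E ((splitAlong hx _).symm (v, ψ)) (g h)) *
          (edgeIndicator E ((splitAlong hx _).symm (v, ψ)) (univ.image x) - d)| ≤
      ε * n ^ k + k ^ 2 * n ^ (k - 1) := by
  choose! c hc𝒬 hcx using hg
  set Φ := splitAlong hx (Fin n)
  set w : (Q : Finset (Fin k)) → (({i // i ∈ Q} → Fin n) → ℝ) := fun Q u =>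
    ∏ h ∈ s with c h = Q, edgeIndicator E (Φ.symm (extend Subtype.val u 0, ψ)) (g h)
  have hfactor : ∀ v, ∏ h ∈ s, edgeIndicator E (Φ.symm (v, ψ)) (g h) =
      ∏ Q ∈ 𝒬, w Q (tupleRestrict Q v) := by
    intro v
    rw [← prod_fiberwise_of_maps_to hc𝒬]
    refine prod_congr rfl fun Q _ => prod_congr rfl fun h hh => ?_
    obtain ⟨hs, rfl⟩ := mem_filter.1 hh
    refine edgeIndicator_congr (splitAlong_symm_eqOn hx ψ fun r hr => ?_)
    exact (Subtype.val_injective.extend_apply (tupleRestrict (c h) v) 0 ⟨r, hcx h hs r hr⟩).symm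
  have hnew : ∀ v, edgeIndicator E (Φ.symm (v, ψ)) (univ.image x) =
      if v ∈ edgeOrd k E then 1 else 0 := by
    intro v
    rw [edgeIndicator_image_univ hx]
    congr!
    exact funext (splitAlong_symm_apply_apply hx v ψ)
  simp only [hfactor, hnew, mul_comm (∏ Q ∈ 𝒬, _)]
  exact hW.abs_sum_mul_prod_le hd0 hd1 w fun Q u => abs_prod_edgeIndicator_le_one _ _ _

lemma WDISC.abs_sum_prod_edgeIndicator_mul_sub_le [Fintype V] (hW : WDISC k n 𝒬 d ε E)
    (hd0 : 0 ≤ d) (hd1 : d ≤ 1) (s : Finset ι) (g : ι → Finset V) {x : Fin k → V}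
    (hx : Injective x) (hg : ∀ h ∈ s, ∃ Q ∈ 𝒬, ∀ r, x r ∈ g h → r ∈ Q) :
    |∑ φ : V → Fin n, (∏ h ∈ s, edgeIndicator E φ (g h)) *
        (edgeIndicator E φ (univ.image x) - d)| ≤
      ε * n ^ Fintype.card V + Fintype.card V ^ 2 * n ^ (Fintype.card V - 1) := by
  rw [← (splitAlong hx (Fin n)).symm.sum_comp, Fintype.sum_prod_type_right]
  calc _ ≤ ∑ ψ : {u // u ∉ Set.range x} → Fin n, (ε * n ^ k + k ^ 2 * n ^ (k - 1)) :=
        (abs_sum_le_sum_abs _ _).trans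
          (sum_le_sum fun ψ _ => hW.abs_sum_splitAlong_symm_le hd0 hd1 s g hx hg ψ)
    _ = n ^ (Fintype.card V - k) * (ε * n ^ k + k ^ 2 * n ^ (k - 1)) := by
        rw [sum_const, card_univ, card_fun_compl_range hx, nsmul_eq_mul]
        push_cast; rfl
    _ ≤ _ := pow_sub_mul_add_le (by simpa using Fintype.card_le_of_injective x hx) ε

end OneEdge

lemma abs_labeledCopies_sub_sum_prod_le {n : ℕ} (VF : Type) [Fintype VF] [DecidableEq VF]
    (EF : Finset (Finset VF)) (E : Finset (Finset (Fin n))) :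
    |(labeledCopies VF EF E : ℝ) - ∑ φ : VF → Fin n, ∏ f ∈ EF, edgeIndicator E φ f| ≤
      Fintype.card VF ^ 2 * n ^ (Fintype.card VF - 1) := by
  have hcount : (labeledCopies VF EF E : ℝ) =
      ∑ φ : VF → Fin n, if Injective φ then ∏ f ∈ EF, edgeIndicator E φ f else 0 := by
    rw [labeledCopies, Set.ncard_eq_toFinset_card', Set.toFinset_ofPred, ← sum_boole]
    refine Fintype.sum_congr _ _ fun φ => ?_
    by_cases hφ : Injective φ
    · simp only [hφ, true_and, if_true, edgeIndicator_of_injective hφ, prod_boole]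
      congr
    · simp [hφ]
  rw [hcount]
  refine (abs_sum_sub_sum_le_of_eq_of_injective (fun φ hφ => if_pos hφ) fun φ => ?_).trans_eq
    (by rw [Fintype.card_fin])
  by_cases hφ : Injective φ
  · simp [hφ]
  · simpa [hφ] using abs_prod_edgeIndicator_le_one EF φ id

lemma QSimple.exists_orderings {k : ℕ} {𝒬 : Finset (Finset (Fin k))} {V : Type}
    [DecidableEq V] {EF : Finset (Finset V)} (hunif : ∀ f ∈ EF, f.card = k) (h : QSimple 𝒬 EF) :
    ∃ x : Fin EF.card → Fin k → V, (∀ j, Injective (x j)) ∧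
      (∀ F : Finset V → ℝ, ∏ f ∈ EF, F f = ∏ j, F (univ.image (x j))) ∧
      ∀ j h, h < j → ∃ Q ∈ 𝒬, ∀ r, x j r ∈ univ.image (x h) → r ∈ Q := by
  obtain ⟨e, he_mem, he_surj, hx⟩ := h
  choose x hx_inj hx_mem hx_simple using hx
  have he : ∀ j, univ.image (x j) = e j := fun j =>
    eq_of_subset_of_card_le
      (fun u hu => by obtain ⟨r, -, rfl⟩ := mem_image.1 hu; exact hx_mem j r)
      (by rw [hunif _ (he_mem j), card_image_of_injective _ (hx_inj j), card_univ,
        Fintype.card_fin])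
  have hEF : univ.image e = EF := by
    ext f
    exact ⟨fun hf => by obtain ⟨j, -, rfl⟩ := mem_image.1 hf; exact he_mem j,
      fun hf => by obtain ⟨j, rfl⟩ := he_surj f hf; exact mem_image_of_mem e (mem_univ j)⟩
  have he_inj : Set.InjOn e ↑(univ : Finset (Fin EF.card)) :=
    card_image_iff.1 (by rw [hEF, card_univ, Fintype.card_fin])
  refine ⟨x, hx_inj, fun F => ?_, fun j h hhj => ?_⟩
  · simp only [he, ← hEF, prod_image he_inj]
  · obtain ⟨Q, hQ, hQx⟩ := hx_simple j h hhj
    exact ⟨Q, hQ, fun r hr => hQx r ⟨he h ▸ hr, hx_mem j r⟩⟩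

section PrefixEdgeCount

variable {n : ℕ} (E : Finset (Finset (Fin n))) {V : Type*} [Fintype V] [DecidableEq V] {m : ℕ}
  (e : Fin m → Finset V)

noncomputable def prefixEdgeCount (i : ℕ) : ℝ :=
  ∑ φ : V → Fin n, ∏ j ∈ univ.filter (fun j : Fin m => (j : ℕ) < i), edgeIndicator E φ (e j)

lemma prefixEdgeCount_zero : prefixEdgeCount E e 0 = n ^ Fintype.card V := by
  simp [prefixEdgeCount]

lemma prefixEdgeCount_of_le {i : ℕ} (hi : m ≤ i) :
    prefixEdgeCount E e i = ∑ φ : V → Fin n, ∏ j, edgeIndicator E φ (e j) := by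
  simp [prefixEdgeCount, fun j : Fin m => j.2.trans_le hi]

lemma prefixEdgeCount_succ_sub_mul (d : ℝ) (j : Fin m) :
    prefixEdgeCount E e (j + 1) - d * prefixEdgeCount E e j =
      ∑ φ : V → Fin n,
        (∏ h ∈ univ.filter (fun h : Fin m => (h : ℕ) < j), edgeIndicator E φ (e h)) *
          (edgeIndicator E φ (e j) - d) := by
  have hfilter : univ.filter (fun h : Fin m => (h : ℕ) < j + 1) =
      insert j (univ.filter fun h : Fin m => (h : ℕ) < j) := by
    ext h
    simp only [mem_filter, mem_univ, true_and, mem_insert, Fin.ext_iff]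
    omega
  have hj : j ∉ univ.filter fun h : Fin m => (h : ℕ) < j := by simp
  simp only [prefixEdgeCount, hfilter, prod_insert hj, mul_sum, ← sum_sub_distrib]
  exact Fintype.sum_congr _ _ fun φ => by ring

end PrefixEdgeCount

theorem WDISC.abs_labeledCopies_sub_le {k n : ℕ} [NeZero n] {𝒬 : Finset (Finset (Fin k))}
    {d ε : ℝ} {E : Finset (Finset (Fin n))} (hW : WDISC k n 𝒬 d ε E) (hd0 : 0 ≤ d)
    (hd1 : d ≤ 1) {VF : Type} [Fintype VF] [DecidableEq VF] {EF : Finset (Finset VF)}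
    (hunif : ∀ f ∈ EF, f.card = k) (hsimple : QSimple 𝒬 EF) :
    |(labeledCopies VF EF E : ℝ) - d ^ EF.card * n ^ Fintype.card VF| ≤
      EF.card * ε * n ^ Fintype.card VF +
        (EF.card + 1) * Fintype.card VF ^ 2 * n ^ (Fintype.card VF - 1) := by
  obtain ⟨x, hx, hprod, hx_simple⟩ := hsimple.exists_orderings hunif
  set S := prefixEdgeCount E fun j => univ.image (x j)
  have hstep : ∀ i < EF.card, |S (i + 1) - d * S i| ≤
      ε * n ^ Fintype.card VF + Fintype.card VF ^ 2 * n ^ (Fintype.card VF - 1) := by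
    intro i hi
    have hsum := prefixEdgeCount_succ_sub_mul E (fun j => univ.image (x j)) d ⟨i, hi⟩
    refine (congrArg abs hsum).trans_le ?_
    exact hW.abs_sum_prod_edgeIndicator_mul_sub_le hd0 hd1 _ _ (hx ⟨i, hi⟩)
      fun h hh => hx_simple _ h (by simpa [Fin.lt_def] using hh)
  have hpartial := abs_sub_pow_mul_le_of_abs_sub_mul_le hd0 hd1 hstep
  simp only [S] at hpartial
  rw [prefixEdgeCount_zero, prefixEdgeCount_of_le _ _ le_rfl] at hpartial
  simp only [← hprod] at hpartial
  calc _ ≤ |(labeledCopies VF EF E : ℝ) - ∑ φ : VF → Fin n, ∏ f ∈ EF, edgeIndicator E φ f| +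
        |∑ φ : VF → Fin n, ∏ f ∈ EF, edgeIndicator E φ f - d ^ EF.card * n ^ Fintype.card VF| :=
        abs_sub_le _ _ _
    _ ≤ _ := add_le_add (abs_labeledCopies_sub_sum_prod_le VF EF E) hpartial
    _ = _ := by ring

theorem wdisc_implies_cl_general (k : ℕ) (𝒬 : Finset (Finset (Fin k)))
    (d : ℝ) (hd0 : 0 ≤ d) (hd1 : d ≤ 1)
    (VF : Type) [Fintype VF] [DecidableEq VF] (EF : Finset (Finset VF))
    (hunif : ∀ f ∈ EF, f.card = k) (hsimple : QSimple 𝒬 EF) (δ : ℝ) (hδ : 0 < δ) :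
    ∃ ε > (0 : ℝ), ∃ n₀ : ℕ, ∀ n ≥ n₀, ∀ E : Finset (Finset (Fin n)),
      (∀ e ∈ E, e.card = k) → WDISC k n 𝒬 d ε E → CL VF EF d δ E := by
  set m := EF.card
  set v := Fintype.card VF
  refine ⟨δ / (2 * (m + 1)), by positivity, max 1 ⌈2 * (m + 1) * v ^ 2 / δ⌉₊,
    fun n hn E _ hW => ?_⟩
  have : NeZero n := ⟨by omega⟩
  have hn_large : (m + 1) * v ^ 2 ≤ δ / 2 * n := by
    have := Nat.ceil_le.1 (le_of_max_le_right hn)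
    rw [div_le_iff₀ hδ] at this
    linarith
  have hε : m * (δ / (2 * (m + 1))) * n ^ v ≤ δ / 2 * n ^ v := by
    gcongr
    rw [mul_div_assoc', div_le_div_iff₀ (by positivity) (by positivity)]
    nlinarith
  have hrest : (m + 1) * v ^ 2 * (n : ℝ) ^ (v - 1) ≤ δ / 2 * n ^ v := by
    rcases Nat.eq_zero_or_pos v with hv | hv
    · have : (0 : ℝ) ≤ δ / 2 := by positivity
      simpa [hv] using this
    · rw [← pow_sub_one_mul hv.ne' (n : ℝ)]
      have := mul_le_mul_of_nonneg_left hn_large (pow_nonneg (Nat.cast_nonneg' n) (v - 1))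
      nlinarith
  exact (hW.abs_labeledCopies_sub_le hd0 hd1 hunif hsimple).trans (by linarith)

/-- `WDISC ⟹ CL` for `𝒬`-simple `F`. -/
theorem wdisc_implies_cl (k : ℕ) (hk : 2 ≤ k) (𝒬 : Finset (Finset (Fin k)))
    (h𝒬 : Finset.univ ∉ 𝒬) (d : ℝ) (hd0 : 0 ≤ d) (hd1 : d ≤ 1)
    (VF : Type) [Fintype VF] [DecidableEq VF] (EF : Finset (Finset VF))
    (hunif : ∀ f ∈ EF, f.card = k) (hsimple : QSimple 𝒬 EF) (δ : ℝ) (hδ : 0 < δ) :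
    ∃ ε > (0 : ℝ), ∃ n₀ : ℕ, ∀ n ≥ n₀, ∀ E : Finset (Finset (Fin n)),
      (∀ e ∈ E, e.card = k) → WDISC k n 𝒬 d ε E → CL VF EF d δ E :=
  wdisc_implies_cl_general k 𝒬 d hd0 hd1 VF EF hunif hsimple δ hδ
end

section
/- For every integer k ≥ 2, every set system 𝒬 ⊆ 𝒫([k]) \ {[k]}, every d ∈ [0,1], and every δ > 0, there exists ε > 0 such that every n-vertex k-uniform hypergraph H that satisfies CL_{𝒬,d}(F,ε) for every subhypergraph F ⊆ M_𝒬 also satisfies DEV_{𝒬,d}(δ). -/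
open Finset
open scoped Classical

/-! Expanding `∏_{f ∈ E(M)} (1_E(f) - d)` over the subsets `S ⊆ E(M)` writes the deviation sum
as `∑_S (-d)^{|E(M) \ S|} N_S(H)`. Replacing each count `N_S(H)` by its predicted value
`d^{|S|} n^{v(M)}` gives `n^{v(M)} (d - d)^{|E(M)|} = 0`, and each of the `2^{|E(M)|}` errors is
at most `ε n^{v(M)}`, so `ε = δ / 2^{|E(M)|}` suffices. -/

section DeviationSum

variable {n : ℕ} {V : Type} [Fintype V] [DecidableEq V]

noncomputable def deviationSum (EF : Finset (Finset V)) (d : ℝ) (E : Finset (Finset (Fin n))) :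
    ℝ :=
  ∑ φ ∈ univ.filter (fun φ : V → Fin n => Function.Injective φ),
    ∏ f ∈ EF, ((if image φ f ∈ E then (1 : ℝ) else 0) - d)

lemma labeledCopies_eq_sum_prod_indicator (EF : Finset (Finset V))
    (E : Finset (Finset (Fin n))) :
    (labeledCopies V EF E : ℝ) =
      ∑ φ ∈ univ.filter (fun φ : V → Fin n => Function.Injective φ),
        ∏ f ∈ EF, (if image φ f ∈ E then (1 : ℝ) else 0) := by
  rw [labeledCopies, Set.ncard_eq_toFinset_card', Set.toFinset_ofPred, ← filter_filter,
    natCast_card_filter]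
  simp_rw [prod_boole]
  congr!

lemma deviationSum_eq_sum_powerset (EF : Finset (Finset V)) (d : ℝ)
    (E : Finset (Finset (Fin n))) :
    deviationSum EF d E =
      ∑ S ∈ EF.powerset, (labeledCopies V S E : ℝ) * (-d) ^ #(EF \ S) := by
  simp_rw [deviationSum, sub_eq_add_neg, prod_add, prod_const]
  rw [sum_comm]
  simp_rw [labeledCopies_eq_sum_prod_indicator, sum_mul]

lemma sum_powerset_pow_mul_neg_pow {α : Type*} [DecidableEq α] {s : Finset α} (hs : s.Nonempty)
    (d : ℝ) : ∑ S ∈ s.powerset, d ^ #S * (-d) ^ #(s \ S) = 0 := by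
  simpa [zero_pow hs.card_pos.ne'] using (prod_add (fun _ => d) (fun _ => -d) s).symm

lemma abs_deviationSum_le {EF : Finset (Finset V)} (hEF : EF.Nonempty) {d ε : ℝ} (hd : |d| ≤ 1)
    {E : Finset (Finset (Fin n))} (hCL : ∀ S ⊆ EF, CL V S d ε E) :
    |deviationSum EF d E| ≤ 2 ^ #EF * (ε * (n : ℝ) ^ Fintype.card V) := by
  set N := (n : ℝ) ^ Fintype.card V
  have hcentred : deviationSum EF d E =
      ∑ S ∈ EF.powerset, ((labeledCopies V S E : ℝ) - d ^ #S * N) * (-d) ^ #(EF \ S) := by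
    have hpredicted : ∑ S ∈ EF.powerset, d ^ #S * N * (-d) ^ #(EF \ S) = 0 := by
      simp_rw [mul_right_comm _ N, ← sum_mul, sum_powerset_pow_mul_neg_pow hEF, zero_mul]
    simp_rw [sub_mul, sum_sub_distrib, hpredicted, sub_zero, deviationSum_eq_sum_powerset]
  calc |deviationSum EF d E|
      ≤ ∑ S ∈ EF.powerset, |(labeledCopies V S E : ℝ) - d ^ #S * N| * |(-d) ^ #(EF \ S)| := by
        rw [hcentred]
        exact (abs_sum_le_sum_abs _ _).trans_eq (by simp_rw [abs_mul])
    _ ≤ ∑ _S ∈ EF.powerset, ε * N * 1 := by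
        refine sum_le_sum fun S hS => ?_
        have hS_count := hCL S (mem_powerset.1 hS)
        have hweight : |(-d) ^ #(EF \ S)| ≤ 1 := by
          rw [abs_pow, abs_neg]
          exact pow_le_one₀ (abs_nonneg d) hd
        exact mul_le_mul hS_count hweight (abs_nonneg _) ((abs_nonneg _).trans hS_count)
    _ = 2 ^ #EF * (ε * N) := by simp

end DeviationSum

lemma MEdges_nonempty {k : ℕ} (𝒬 : Finset (Finset (Fin k))) : (MEdges 𝒬).Nonempty :=
  ⟨MEdge 𝒬 fun _ => false, mem_image_of_mem _ (mem_univ _)⟩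

theorem cl_implies_dev_general (k : ℕ) (𝒬 : Finset (Finset (Fin k)))
    (d : ℝ) (hd0 : 0 ≤ d) (hd1 : d ≤ 1) (δ : ℝ) (hδ : 0 < δ) :
    ∃ ε > (0 : ℝ), ∀ n : ℕ, ∀ E : Finset (Finset (Fin n)),
      (∀ e ∈ E, e.card = k) →
      (∀ EF ⊆ MEdges 𝒬, CL (MVertex k 𝒬) EF d ε E) →
      DEV k n 𝒬 d δ E := by
  refine ⟨δ / 2 ^ #(MEdges 𝒬), by positivity, fun n E _ hCL => ?_⟩
  have hbound := abs_deviationSum_le (MEdges_nonempty 𝒬) (abs_le.2 ⟨by linarith, hd1⟩) hCL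
  rw [← mul_assoc, mul_div_cancel₀ _ (by positivity)] at hbound
  exact (le_abs_self _).trans hbound

/-- `CL` for all subhypergraphs of `M_𝒬` implies `DEV`. -/
theorem cl_implies_dev (k : ℕ) (hk : 2 ≤ k) (𝒬 : Finset (Finset (Fin k)))
    (h𝒬 : Finset.univ ∉ 𝒬) (d : ℝ) (hd0 : 0 ≤ d) (hd1 : d ≤ 1) (δ : ℝ) (hδ : 0 < δ) :
    ∃ ε > (0 : ℝ), ∀ n : ℕ, ∀ E : Finset (Finset (Fin n)),
      (∀ e ∈ E, e.card = k) →
      (∀ EF ⊆ MEdges 𝒬, CL (MVertex k 𝒬) EF d ε E) →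
      DEV k n 𝒬 d δ E :=
  cl_implies_dev_general k 𝒬 d hd0 hd1 δ hδ
end

section
/- For every integer k ≥ 2, every set system 𝒬 = {Q_1,…,Q_ℓ} ⊆ 𝒫([k]) \ {[k]}, every d ∈ [0,1], and every δ > 0, there exists ε > 0 such that for all sufficiently large n the following holds: if H = (V,E) is an n-vertex k-uniform hypergraph satisfying |Σ_{φ : V(M_𝒬) → V} Π_{f ∈ E(M_𝒬)} (1_{E⃗}(φ(f)) − d)| ≤ ε n^{v(M_𝒬)}, where the sum ranges over all (not necessarily injective) maps φ and φ(f) is the ordered k-tuple of images of the vertices of the edge f (ordered according to the k vertex classes of M_𝒬), then H satisfies WDISC_{𝒬,d}(δ). -/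
open Finset
open scoped Classical

/-!
Write `t_𝒮(g)` for the average, over all maps `φ : V(M_𝒮) → [n]`, of the product of `g(φ(f))`
over the edges `f` of `M_𝒮`. Since `M_{𝒮 ∪ {Q}} = db_Q(M_𝒮)`, splitting `φ` into its restriction
`x` to the classes in `Q` and its restriction `y` to the other classes and applying Cauchy–Schwarz
in `x` gives `t_𝒮(u · g)² ≤ t_{𝒮 ∪ {Q}}(g)` for every weight `u` with `|u| ≤ 1` that depends only
on the `Q`-coordinates. Peeling off the weights `w_Q` one at a time, starting from
`g = (1_E⃗ - d) ∏_{Q ∈ 𝒬} w_Q`, yields `|t_∅(g)|^(2^|𝒬|) ≤ |t_𝒬(1_E⃗ - d)|`. The left side is the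
`WDISC` sum divided by `n^k` and the right side the `DEV` sum divided by `n^v(M_𝒬)`, so
`ε = δ^(2^|𝒬|)` works for every `n`.
-/

open scoped BigOperators

section Expectation

variable {ι α R : Type*} [Fintype ι] [Fintype α]

theorem sq_expect_mul_le_expect_sq [Field R] [LinearOrder R] [IsStrictOrderedRing R] {f g : ι → R}
    (hf : ∀ i, |f i| ≤ 1) : (𝔼 i, f i * g i) ^ 2 ≤ 𝔼 i, g i ^ 2 := by
  have hf2 : 𝔼 i, f i ^ 2 ≤ 1 := by
    rcases isEmpty_or_nonempty ι with hι | hι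
    · simp
    · exact expect_le univ_nonempty fun i _ => (sq_le_one_iff_abs_le_one _).2 (hf i)
  calc (𝔼 i, f i * g i) ^ 2 ≤ (𝔼 i, f i ^ 2) * 𝔼 i, g i ^ 2 :=
        expect_mul_sq_le_sq_mul_sq _ _ _
    _ ≤ 1 * 𝔼 i, g i ^ 2 :=
        mul_le_mul_of_nonneg_right hf2 (expect_nonneg fun i _ => sq_nonneg _)
    _ = 𝔼 i, g i ^ 2 := one_mul _

theorem expect_bool_arrow_prod_eq_sq [Semifield R] [CharZero R] (f : α → R) :
    𝔼 y : Bool → α, ∏ c, f (y c) = (𝔼 a, f a) ^ 2 := by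
  rw [Fintype.expect_equiv (Equiv.boolArrowEquivProd α) _ (fun p => f p.1 * f p.2)
    (fun y => (Fintype.prod_bool _).trans (mul_comm _ _)), ← univ_product_univ,
    expect_product, sq, Fintype.expect_mul_expect]

end Expectation

namespace MVertex

variable {k : ℕ} {𝒮 : Finset (Finset (Fin k))} {Q : Finset (Fin k)}

def restrict (z : MVertex k (insert Q 𝒮)) : MVertex k 𝒮 :=
  ⟨z.1, fun p => z.2 ⟨p.1, mem_insert_of_mem p.2.1, p.2.2⟩⟩

/-- The coordinate of `z` added by doubling along `Q`; junk value `false` when the class of `z`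
lies in `Q`, where no coordinate was added. -/
def doublingBit (z : MVertex k (insert Q 𝒮)) : Bool :=
  if h : z.1 ∈ Q then false else z.2 ⟨Q, mem_insert_self Q 𝒮, h⟩

def extend (Q : Finset (Fin k)) (c : Bool) (z : MVertex k 𝒮) : MVertex k (insert Q 𝒮) :=
  ⟨z.1, fun p => if h : p.1 = Q then c
    else z.2 ⟨p.1, (mem_insert.1 p.2.1).resolve_left h, p.2.2⟩⟩

theorem restrict_extend (hQ : Q ∉ 𝒮) (c : Bool) (z : MVertex k 𝒮) :
    restrict (extend Q c z) = z :=
  congrArg (Sigma.mk z.1) (funext fun p => dif_neg fun h : p.1 = Q => hQ (h ▸ p.2.1))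

theorem doublingBit_extend (c : Bool) (z : MVertex k 𝒮) (hz : z.1 ∉ Q) :
    doublingBit (extend Q c z) = c := by
  simp only [doublingBit, extend, dif_neg hz, dif_pos]

theorem extend_doublingBit_restrict (z : MVertex k (insert Q 𝒮)) :
    extend Q (doublingBit z) (restrict z) = z := by
  obtain ⟨i, b⟩ := z
  refine congrArg (Sigma.mk i) (funext fun ⟨P, hP⟩ => ?_)
  by_cases h : P = Q
  · subst h
    exact (dif_pos rfl).trans (dif_neg hP.2)
  · exact dif_neg h

variable (k) in
def emptyEquiv : MVertex k ∅ ≃ Fin k where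
  toFun z := z.1
  invFun i := ⟨i, fun p => absurd p.2.1 (notMem_empty _)⟩
  left_inv z := congrArg (Sigma.mk z.1) (funext fun p => absurd p.2.1 (notMem_empty _))
  right_inv _ := rfl

end MVertex

section Doubling

variable {k n : ℕ} {𝒮 : Finset (Finset (Fin k))} {Q : Finset (Fin k)}

open MVertex

def edgeIndexInsertEquiv (hQ : Q ∉ 𝒮) :
    ({Q' // Q' ∈ insert Q 𝒮} → Bool) ≃ ({Q' // Q' ∈ 𝒮} → Bool) × Bool where
  toFun a := (fun q => a ⟨q.1, mem_insert_of_mem q.2⟩, a ⟨Q, mem_insert_self Q 𝒮⟩)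
  invFun p q := if h : q.1 = Q then p.2 else p.1 ⟨q.1, (mem_insert.1 q.2).resolve_left h⟩
  left_inv a := by
    funext ⟨q, hq⟩
    by_cases h : q = Q
    · subst h
      exact dif_pos rfl
    · exact dif_neg h
  right_inv p :=
    Prod.ext (funext fun q => dif_neg fun h : q.1 = Q => hQ (h ▸ q.2)) (dif_pos rfl)

variable (Q) in
def splitMaps :
    (MVertex k 𝒮 → Fin n) ≃ ({z : MVertex k 𝒮 // z.1 ∈ Q} → Fin n) ×
      ({z : MVertex k 𝒮 // z.1 ∉ Q} → Fin n) :=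
  Equiv.piEquivPiSubtypeProd _ _

theorem splitMaps_symm_apply_of_mem (p : ({z : MVertex k 𝒮 // z.1 ∈ Q} → Fin n) ×
    ({z : MVertex k 𝒮 // z.1 ∉ Q} → Fin n)) {z : MVertex k 𝒮} (h : z.1 ∈ Q) :
    (splitMaps Q).symm p z = p.1 ⟨z, h⟩ :=
  dif_pos h

theorem splitMaps_symm_apply_of_notMem (p : ({z : MVertex k 𝒮 // z.1 ∈ Q} → Fin n) ×
    ({z : MVertex k 𝒮 // z.1 ∉ Q} → Fin n)) {z : MVertex k 𝒮} (h : z.1 ∉ Q) :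
    (splitMaps Q).symm p z = p.2 ⟨z, h⟩ :=
  dif_neg h

/-- `M_{insert Q 𝒮} = db_Q(M_𝒮)`: a map on its vertices is a map on the classes of `M_𝒮` in `Q`
together with two maps on the remaining classes, one for each value of the doubling bit. -/
def doubledMaps (hQ : Q ∉ 𝒮) :
    (MVertex k (insert Q 𝒮) → Fin n) ≃ ({z : MVertex k 𝒮 // z.1 ∈ Q} → Fin n) ×
      (Bool → {z : MVertex k 𝒮 // z.1 ∉ Q} → Fin n) where
  toFun φ := (fun z => φ (extend Q false z), fun c z => φ (extend Q c z))
  invFun p z := (splitMaps Q).symm (p.1, p.2 (doublingBit z)) (restrict z)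
  left_inv φ := by
    funext z
    have hz := extend_doublingBit_restrict z
    by_cases h : z.1 ∈ Q
    · rw [doublingBit, dif_pos h] at hz
      exact (splitMaps_symm_apply_of_mem (z := restrict z) _ h).trans (congrArg φ hz)
    · exact (splitMaps_symm_apply_of_notMem (z := restrict z) _ h).trans (congrArg φ hz)
  right_inv p := by
    refine Prod.ext (funext fun z => ?_) (funext fun c => funext fun z => ?_)
    · dsimp only
      rw [splitMaps_symm_apply_of_mem _ (by exact z.2)]
      exact congrArg p.1 (Subtype.ext (restrict_extend hQ _ _))
    · dsimp only
      rw [splitMaps_symm_apply_of_notMem _ (by exact z.2), doublingBit_extend _ _ z.2]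
      exact congrArg (p.2 c) (Subtype.ext (restrict_extend hQ _ _))

theorem doubledMaps_symm_Mvert (hQ : Q ∉ 𝒮)
    (p : ({z : MVertex k 𝒮 // z.1 ∈ Q} → Fin n) × (Bool → {z : MVertex k 𝒮 // z.1 ∉ Q} → Fin n))
    (a : {Q' // Q' ∈ insert Q 𝒮} → Bool) (i : Fin k) :
    (doubledMaps hQ).symm p (Mvert (insert Q 𝒮) a i) =
      (splitMaps Q).symm (p.1, p.2 (edgeIndexInsertEquiv hQ a).2)
        (Mvert 𝒮 (edgeIndexInsertEquiv hQ a).1 i) := by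
  change (splitMaps Q).symm (p.1, p.2 (doublingBit (Mvert (insert Q 𝒮) a i)))
    (Mvert 𝒮 (edgeIndexInsertEquiv hQ a).1 i) = _
  by_cases hi : i ∈ Q
  · rw [splitMaps_symm_apply_of_mem (z := Mvert 𝒮 _ i) _ hi,
      splitMaps_symm_apply_of_mem (z := Mvert 𝒮 _ i) _ hi]
  · rw [doublingBit, dif_neg (show (Mvert (insert Q 𝒮) a i).1 ∉ Q from hi)]
    rfl

end Doubling

section Density

variable {k n : ℕ} {𝒮 : Finset (Finset (Fin k))} {Q : Finset (Fin k)}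

noncomputable def mDensity (𝒮 : Finset (Finset (Fin k))) (g : (Fin k → Fin n) → ℝ) : ℝ :=
  𝔼 φ : MVertex k 𝒮 → Fin n, ∏ a, g fun i => φ (Mvert 𝒮 a i)

noncomputable def splitEdgeProd (g : (Fin k → Fin n) → ℝ) (x : {z : MVertex k 𝒮 // z.1 ∈ Q} → Fin n)
    (y : {z : MVertex k 𝒮 // z.1 ∉ Q} → Fin n) : ℝ :=
  ∏ a, g fun i => (splitMaps Q).symm (x, y) (Mvert 𝒮 a i)

theorem mDensity_mul_tupleRestrict (u : ({i // i ∈ Q} → Fin n) → ℝ) (g : (Fin k → Fin n) → ℝ) :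
    mDensity 𝒮 (fun v => u (tupleRestrict Q v) * g v) =
      𝔼 x, (∏ a : {Q' // Q' ∈ 𝒮} → Bool, u fun j => x ⟨Mvert 𝒮 a j, j.2⟩) *
        𝔼 y, splitEdgeProd g x y := by
  rw [mDensity, expect_equiv (splitMaps Q) (t := univ ×ˢ univ)
    (g := fun p => ∏ a, u (tupleRestrict Q fun i => (splitMaps Q).symm p (Mvert 𝒮 a i)) *
      g fun i => (splitMaps Q).symm p (Mvert 𝒮 a i)) (by simp) (fun φ _ => by simp),
    expect_product]
  refine expect_congr rfl fun x _ => ?_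
  rw [mul_expect]
  refine expect_congr rfl fun y _ => ?_
  rw [splitEdgeProd, ← prod_mul_distrib]
  refine prod_congr rfl fun a _ => ?_
  congr 2
  funext j
  exact splitMaps_symm_apply_of_mem _ j.2

theorem mDensity_insert (hQ : Q ∉ 𝒮) (g : (Fin k → Fin n) → ℝ) :
    mDensity (insert Q 𝒮) g =
      𝔼 x : {z : MVertex k 𝒮 // z.1 ∈ Q} → Fin n, (𝔼 y, splitEdgeProd g x y) ^ 2 := by
  rw [mDensity, expect_equiv (doubledMaps hQ) (t := univ ×ˢ univ)
    (g := fun p => ∏ a, g fun i => (doubledMaps hQ).symm p (Mvert _ a i)) (by simp)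
    (fun φ _ => by simp), expect_product]
  refine expect_congr rfl fun x _ => ?_
  rw [← expect_bool_arrow_prod_eq_sq]
  refine expect_congr rfl fun y _ => ?_
  simp only [doubledMaps_symm_Mvert]
  rw [Fintype.prod_equiv (edgeIndexInsertEquiv hQ) _
    (fun ac => g fun i => (splitMaps Q).symm (x, y ac.2) (Mvert 𝒮 ac.1 i)) (fun a => rfl),
    Fintype.prod_prod_type, prod_comm]
  rfl

theorem sq_mDensity_mul_le (hQ : Q ∉ 𝒮) {u : ({i // i ∈ Q} → Fin n) → ℝ} (hu : ∀ y, |u y| ≤ 1)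
    (g : (Fin k → Fin n) → ℝ) :
    mDensity 𝒮 (fun v => u (tupleRestrict Q v) * g v) ^ 2 ≤ mDensity (insert Q 𝒮) g := by
  rw [mDensity_mul_tupleRestrict, mDensity_insert hQ]
  refine sq_expect_mul_le_expect_sq fun x => ?_
  rw [abs_prod]
  exact prod_le_one (fun _ _ => abs_nonneg _) fun _ _ => hu _

theorem abs_mDensity_empty_pow_le {u : ∀ Q : Finset (Fin k), ({i // i ∈ Q} → Fin n) → ℝ}
    (hu : ∀ Q y, |u Q y| ≤ 1) (𝒮 : Finset (Finset (Fin k))) (f : (Fin k → Fin n) → ℝ) :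
    |mDensity ∅ fun v => f v * ∏ Q ∈ 𝒮, u Q (tupleRestrict Q v)| ^ 2 ^ #𝒮 ≤ |mDensity 𝒮 f| := by
  induction 𝒮 using Finset.induction_on generalizing f with
  | empty => simp
  | insert Q 𝒮 hQ ih =>
    have hprod : (fun v => f v * ∏ P ∈ insert Q 𝒮, u P (tupleRestrict P v)) =
        fun v => (u Q (tupleRestrict Q v) * f v) * ∏ P ∈ 𝒮, u P (tupleRestrict P v) := by
      funext v
      rw [prod_insert hQ]
      ring
    calc _ = (|mDensity ∅ fun v => (u Q (tupleRestrict Q v) * f v) *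
            ∏ P ∈ 𝒮, u P (tupleRestrict P v)| ^ 2 ^ #𝒮) ^ 2 := by
          rw [hprod, card_insert_of_notMem hQ, pow_succ, pow_mul]
      _ ≤ |mDensity 𝒮 fun v => u Q (tupleRestrict Q v) * f v| ^ 2 :=
          pow_le_pow_left₀ (by positivity) (ih _) 2
      _ = mDensity 𝒮 (fun v => u Q (tupleRestrict Q v) * f v) ^ 2 := sq_abs _
      _ ≤ mDensity (insert Q 𝒮) f := sq_mDensity_mul_le hQ (hu Q) f
      _ ≤ |mDensity (insert Q 𝒮) f| := le_abs_self _

theorem mDensity_empty (g : (Fin k → Fin n) → ℝ) : mDensity ∅ g = 𝔼 v, g v := by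
  refine Fintype.expect_equiv ((MVertex.emptyEquiv k).arrowCongr (Equiv.refl _)) _ _ fun φ => ?_
  rw [Fintype.prod_unique]
  exact congrArg g (funext fun i =>
    congrArg φ (congrArg (Sigma.mk i) (funext fun p => absurd p.2.1 (notMem_empty _))))

end Density

theorem dev_implies_wdisc_general (k : ℕ) (𝒬 : Finset (Finset (Fin k))) (d : ℝ) (δ : ℝ) (hδ : 0 < δ) :
    ∃ ε > (0 : ℝ), ∃ n₀ : ℕ, ∀ n ≥ n₀, ∀ E : Finset (Finset (Fin n)),
      (∀ e ∈ E, e.card = k) →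
      |∑ φ : MVertex k 𝒬 → Fin n, ∏ a : ({Q : Finset (Fin k) // Q ∈ 𝒬} → Bool),
          ((if (fun i => φ (Mvert 𝒬 a i)) ∈ edgeOrd k E then (1 : ℝ) else 0) - d)| ≤
        ε * (n : ℝ) ^ Fintype.card (MVertex k 𝒬) →
      WDISC k n 𝒬 d δ E := by
  refine ⟨δ ^ 2 ^ #𝒬, by positivity, 0, fun n _ E _ hDEV w hw => ?_⟩
  set f : (Fin k → Fin n) → ℝ := fun v => (if v ∈ edgeOrd k E then 1 else 0) - d
  have hu : ∀ Q y, |if Function.Injective y then w Q y else 0| ≤ 1 := fun Q y => by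
    split_ifs
    exacts [abs_le.2 (hw Q y), by simp]
  have hdev : |mDensity 𝒬 f| ≤ δ ^ 2 ^ #𝒬 := by
    rw [mDensity, Fintype.expect_eq_sum_div_card, abs_div, Nat.abs_cast]
    simp only [Fintype.card_fun, Fintype.card_fin, Nat.cast_pow]
    exact div_le_of_le_mul₀ (by positivity) (by positivity) hDEV
  have hwdisc : |𝔼 v, f v * wProd 𝒬 w v| ≤ δ := by
    have h := (abs_mDensity_empty_pow_le hu 𝒬 f).trans hdev
    rw [mDensity_empty] at h
    exact (pow_le_pow_iff_left₀ (abs_nonneg _) hδ.le (by positivity)).1 h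
  rw [← Fintype.card_mul_expect, abs_mul, Nat.abs_cast, mul_comm δ]
  simp only [Fintype.card_fun, Fintype.card_fin, Nat.cast_pow]
  exact mul_le_mul_of_nonneg_left hwdisc (by positivity)

/-- the "functional" version of `DEV` implies `WDISC`. -/
theorem dev_implies_wdisc (k : ℕ) (hk : 2 ≤ k) (𝒬 : Finset (Finset (Fin k)))
    (h𝒬 : Finset.univ ∉ 𝒬) (d : ℝ) (hd0 : 0 ≤ d) (hd1 : d ≤ 1) (δ : ℝ) (hδ : 0 < δ) :
    ∃ ε > (0 : ℝ), ∃ n₀ : ℕ, ∀ n ≥ n₀, ∀ E : Finset (Finset (Fin n)),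
      (∀ e ∈ E, e.card = k) →
      |∑ φ : MVertex k 𝒬 → Fin n, ∏ a : ({Q : Finset (Fin k) // Q ∈ 𝒬} → Bool),
          ((if (fun i => φ (Mvert 𝒬 a i)) ∈ edgeOrd k E then (1 : ℝ) else 0) - d)| ≤
        ε * (n : ℝ) ^ Fintype.card (MVertex k 𝒬) →
      WDISC k n 𝒬 d δ E :=
  dev_implies_wdisc_general k 𝒬 d δ hδ
end

section
/- For every integer k ≥ 2, every d ∈ [0,1], and every set system 𝒬 ⊆ 𝒫([k]), the properties DISC_{𝒬,d} and DISC_{𝒜(𝒬),d} are equivalent, where 𝒜(𝒬) ⊆ 𝒬 is the antichain of inclusion-maximal elements of 𝒬. Concretely: for every δ > 0 there exist ε > 0 and n₀ such that every n-vertex k-uniform hypergraph with n ≥ n₀ satisfying DISC_{𝒬,d}(ε) satisfies DISC_{𝒜(𝒬),d}(δ), and vice versa with the roles of 𝒬 and 𝒜(𝒬) exchanged. -/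
open Finset
open scoped Classical

/-!
The families of tuples that can occur as `𝒦_k(𝒢)` are the same for `𝒬` and for `𝒜(𝒬)`: a
family for `𝒜(𝒬)` extends to `𝒬` by complete hypergraphs, and conversely the constraint
`v_Q ∈ G_Q` can be moved into the hypergraph of any `A ⊇ Q` as a constraint on `v_A`, and
every `Q ∈ 𝒬` lies in some maximal `A`. So for each `n` and `ε` the two properties
`DISC(ε)` are literally the same.
-/

lemma exists_mem_maxElems_superset {k : ℕ} {𝒬 : Finset (Finset (Fin k))} {Q : Finset (Fin k)}
    (hQ : Q ∈ 𝒬) : ∃ A ∈ maxElems 𝒬, Q ⊆ A := by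
  obtain ⟨A, hQA, hA⟩ := 𝒬.exists_le_maximal hQ
  exact ⟨A, mem_filter.mpr ⟨hA.prop, fun Q' hQ' hAQ' => le_antisymm hAQ' (hA.2 hQ' hAQ')⟩, hQA⟩

lemma maxElems_subset {k : ℕ} (𝒬 : Finset (Finset (Fin k))) : maxElems 𝒬 ⊆ 𝒬 :=
  filter_subset _ _

lemma supportedTuples_eq_of_subset {k n : ℕ} {𝒬' 𝒬 : Finset (Finset (Fin k))} (h : 𝒬' ⊆ 𝒬)
    (G : (Q : Finset (Fin k)) → Set ({i // i ∈ Q} → Fin n)) :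
    supportedTuples 𝒬' G =
      supportedTuples 𝒬 fun Q => if Q ∈ 𝒬' then G Q else Set.univ := by
  ext v
  refine and_congr_right fun _ => ⟨fun hv Q _ => ?_, fun hv Q hQ => ?_⟩
  · dsimp only
    split_ifs with hQ
    exacts [hv Q hQ, Set.mem_univ _]
  · simpa [hQ] using hv Q (h hQ)

lemma supportedTuples_eq_of_forall_exists_superset {k n : ℕ} {𝒬 𝒜 : Finset (Finset (Fin k))}
    (h : ∀ Q ∈ 𝒬, ∃ A ∈ 𝒜, Q ⊆ A) (G : (Q : Finset (Fin k)) → Set ({i // i ∈ Q} → Fin n)) :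
    supportedTuples 𝒬 G =
      supportedTuples 𝒜 fun A =>
        {y | ∀ Q ∈ 𝒬, ∀ hQA : Q ⊆ A, (fun i : {i // i ∈ Q} => y ⟨i.1, hQA i.2⟩) ∈ G Q} := by
  ext v
  refine and_congr_right fun _ => ⟨fun hv A _ Q hQ _ => hv Q hQ, fun hv Q hQ => ?_⟩
  obtain ⟨A, hA, hQA⟩ := h Q hQ
  exact hv A hA Q hQ hQA

lemma DISC.of_forall_exists_supportedTuples_eq {k n : ℕ} {𝒬 𝒬' : Finset (Finset (Fin k))}
    {d ε : ℝ} {E : Finset (Finset (Fin n))}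
    (h : ∀ G : (Q : Finset (Fin k)) → Set ({i // i ∈ Q} → Fin n),
      ∃ G', supportedTuples 𝒬 G = supportedTuples 𝒬' G')
    (hE : DISC k n 𝒬' d ε E) : DISC k n 𝒬 d ε E := fun G => by
  obtain ⟨G', hG'⟩ := h G
  rw [hG']
  exact hE G'

lemma DISC_maxElems_iff {k n : ℕ} (𝒬 : Finset (Finset (Fin k))) (d ε : ℝ)
    (E : Finset (Finset (Fin n))) : DISC k n (maxElems 𝒬) d ε E ↔ DISC k n 𝒬 d ε E :=
  ⟨DISC.of_forall_exists_supportedTuples_eq fun G =>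
      ⟨_, supportedTuples_eq_of_forall_exists_superset
        (fun _ => exists_mem_maxElems_superset) G⟩,
    DISC.of_forall_exists_supportedTuples_eq fun G =>
      ⟨_, supportedTuples_eq_of_subset (maxElems_subset 𝒬) G⟩⟩

theorem disc_iff_disc_maxElems_general (k : ℕ) (d : ℝ)
    (𝒬 : Finset (Finset (Fin k))) :
    (∀ δ > (0 : ℝ), ∃ ε > (0 : ℝ), ∃ n₀ : ℕ, ∀ n ≥ n₀, ∀ E : Finset (Finset (Fin n)),
      (∀ e ∈ E, e.card = k) → DISC k n 𝒬 d ε E → DISC k n (maxElems 𝒬) d δ E) ∧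
    (∀ δ > (0 : ℝ), ∃ ε > (0 : ℝ), ∃ n₀ : ℕ, ∀ n ≥ n₀, ∀ E : Finset (Finset (Fin n)),
      (∀ e ∈ E, e.card = k) → DISC k n (maxElems 𝒬) d ε E → DISC k n 𝒬 d δ E) :=
  ⟨fun δ hδ => ⟨δ, hδ, 0, fun _ _ E _ => (DISC_maxElems_iff 𝒬 d δ E).mpr⟩,
    fun δ hδ => ⟨δ, hδ, 0, fun _ _ E _ => (DISC_maxElems_iff 𝒬 d δ E).mp⟩⟩

/-- `DISC_{𝒬,d}` and `DISC_{𝒜(𝒬),d}` are equivalent, where `𝒜(𝒬)` is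
the antichain of inclusion-maximal elements of `𝒬`. -/
theorem disc_iff_disc_maxElems (k : ℕ) (hk : 2 ≤ k) (d : ℝ) (hd0 : 0 ≤ d) (hd1 : d ≤ 1)
    (𝒬 : Finset (Finset (Fin k))) :
    (∀ δ > (0 : ℝ), ∃ ε > (0 : ℝ), ∃ n₀ : ℕ, ∀ n ≥ n₀, ∀ E : Finset (Finset (Fin n)),
      (∀ e ∈ E, e.card = k) → DISC k n 𝒬 d ε E → DISC k n (maxElems 𝒬) d δ E) ∧
    (∀ δ > (0 : ℝ), ∃ ε > (0 : ℝ), ∃ n₀ : ℕ, ∀ n ≥ n₀, ∀ E : Finset (Finset (Fin n)),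
      (∀ e ∈ E, e.card = k) → DISC k n (maxElems 𝒬) d ε E → DISC k n 𝒬 d δ E) :=
  disc_iff_disc_maxElems_general k d 𝒬
end

section
/- For every integer k ≥ 2, every d ∈ [0,1], and all set systems 𝒜, ℬ ⊆ 𝒫([k]) with 𝒜 ≼ ℬ, the property DISC_{ℬ,d} implies DISC_{𝒜,d}. Concretely: for every δ > 0 there exist ε > 0 and n₀ such that every n-vertex k-uniform hypergraph with n ≥ n₀ satisfying DISC_{ℬ,d}(ε) also satisfies DISC_{𝒜,d}(δ). -/
open Finset
open scoped Classical

/- A permutation `φ` with `φ(A) ⊆ B` for some `B ∈ ℬ`, for every `A ∈ 𝒜`, lets every family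
indexed by `𝒜` be re-encoded as a family indexed by `ℬ`: the `B`-coordinates of a tuple `v`
determine the `A`-coordinates of `v ∘ φ` whenever `φ(A) ⊆ B`. The supported tuples of the
new family are exactly the preimages of the old ones under `v ↦ v ∘ φ`, a bijection of
`[n]^[k]` that also preserves `E⃗`, so both counts in `DISC` are unchanged. -/

section PermDominated

variable {k n : ℕ}

def pullbackFamily (φ : Equiv.Perm (Fin k)) (𝒜 : Finset (Finset (Fin k)))
    (G : (Q : Finset (Fin k)) → Set ({i // i ∈ Q} → Fin n)) :
    (Q : Finset (Fin k)) → Set ({i // i ∈ Q} → Fin n) :=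
  fun B => {y | ∀ A ∈ 𝒜, Finset.image φ A ⊆ B →
    ∀ w : Fin k → Fin n, tupleRestrict B w = y → tupleRestrict A (w ∘ φ) ∈ G A}

lemma tupleRestrict_comp_perm_eq {φ : Equiv.Perm (Fin k)} {A B : Finset (Fin k)}
    (hAB : Finset.image φ A ⊆ B) {v w : Fin k → Fin n}
    (hvw : tupleRestrict B w = tupleRestrict B v) :
    tupleRestrict A (w ∘ φ) = tupleRestrict A (v ∘ φ) := by
  funext a
  exact congrFun hvw ⟨φ a, hAB (Finset.mem_image_of_mem φ a.2)⟩

lemma mem_supportedTuples_pullbackFamily_iff {φ : Equiv.Perm (Fin k)}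
    {𝒜 ℬ : Finset (Finset (Fin k))} (hφ : ∀ A ∈ 𝒜, ∃ B ∈ ℬ, Finset.image φ A ⊆ B)
    (G : (Q : Finset (Fin k)) → Set ({i // i ∈ Q} → Fin n)) (v : Fin k → Fin n) :
    v ∈ supportedTuples ℬ (pullbackFamily φ 𝒜 G) ↔ v ∘ φ ∈ supportedTuples 𝒜 G := by
  simp only [supportedTuples, pullbackFamily, Set.mem_ofPred_eq, Equiv.injective_comp]
  refine and_congr_right fun _ => ⟨fun h A hA => ?_, fun h B _ A hA hAB w hw => ?_⟩
  · obtain ⟨B, hB, hAB⟩ := hφ A hA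
    exact h B hB A hA hAB v rfl
  · rw [tupleRestrict_comp_perm_eq hAB hw]
    exact h A hA

lemma comp_perm_mem_edgeOrd_iff (φ : Equiv.Perm (Fin k)) (E : Finset (Finset (Fin n)))
    (v : Fin k → Fin n) : v ∘ φ ∈ edgeOrd k E ↔ v ∈ edgeOrd k E := by
  have himage : Finset.image (v ∘ φ) Finset.univ = Finset.image v Finset.univ := by
    rw [← Finset.image_image, Finset.image_univ_equiv]
  simp only [edgeOrd, Set.mem_ofPred_eq, Equiv.injective_comp, himage]

lemma ncard_preimage_comp_perm (φ : Equiv.Perm (Fin k)) (S : Set (Fin k → Fin n)) :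
    ((· ∘ φ) ⁻¹' S).ncard = S.ncard := by
  refine Set.ncard_preimage_of_injective_subset_range φ.surjective.injective_comp_right ?_
  intro u _
  exact ⟨u ∘ φ.symm, by funext i; simp⟩

theorem DISC.of_perm_dominated {d ε : ℝ} {E : Finset (Finset (Fin n))}
    {𝒜 ℬ : Finset (Finset (Fin k))} {φ : Equiv.Perm (Fin k)}
    (hφ : ∀ A ∈ 𝒜, ∃ B ∈ ℬ, Finset.image φ A ⊆ B) (h : DISC k n ℬ d ε E) :
    DISC k n 𝒜 d ε E := by
  intro G
  have hsupp : supportedTuples ℬ (pullbackFamily φ 𝒜 G) = (· ∘ φ) ⁻¹' supportedTuples 𝒜 G :=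
    Set.ext (mem_supportedTuples_pullbackFamily_iff hφ G)
  have hedge : edgeOrd k E ∩ supportedTuples ℬ (pullbackFamily φ 𝒜 G) =
      (· ∘ φ) ⁻¹' (edgeOrd k E ∩ supportedTuples 𝒜 G) := by
    rw [hsupp, Set.preimage_inter]
    congr 1
    exact Set.ext fun v => (comp_perm_mem_edgeOrd_iff φ E v).symm
  have := h (pullbackFamily φ 𝒜 G)
  rwa [hedge, hsupp, ncard_preimage_comp_perm, ncard_preimage_comp_perm] at this

end PermDominated

theorem disc_mono_general (k : ℕ) (d : ℝ)
    (𝒜 ℬ : Finset (Finset (Fin k)))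
    (hAB : ∃ φ : Equiv.Perm (Fin k), ∀ A ∈ 𝒜, ∃ B ∈ ℬ, Finset.image φ A ⊆ B) :
    ∀ δ > (0 : ℝ), ∃ ε > (0 : ℝ), ∃ n₀ : ℕ, ∀ n ≥ n₀, ∀ E : Finset (Finset (Fin n)),
      (∀ e ∈ E, e.card = k) → DISC k n ℬ d ε E → DISC k n 𝒜 d δ E := by
  obtain ⟨φ, hφ⟩ := hAB
  exact fun δ hδ => ⟨δ, hδ, 0, fun _ _ _ _ => DISC.of_perm_dominated hφ⟩

/-- `𝒜 ≼ ℬ` implies that `DISC_{ℬ,d}` implies `DISC_{𝒜,d}`. -/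
theorem disc_mono (k : ℕ) (hk : 2 ≤ k) (d : ℝ) (hd0 : 0 ≤ d) (hd1 : d ≤ 1)
    (𝒜 ℬ : Finset (Finset (Fin k)))
    (hAB : ∃ φ : Equiv.Perm (Fin k), ∀ A ∈ 𝒜, ∃ B ∈ ℬ, Finset.image φ A ⊆ B) :
    ∀ δ > (0 : ℝ), ∃ ε > (0 : ℝ), ∃ n₀ : ℕ, ∀ n ≥ n₀, ∀ E : Finset (Finset (Fin n)),
      (∀ e ∈ E, e.card = k) → DISC k n ℬ d ε E → DISC k n 𝒜 d δ E :=
  disc_mono_general k d 𝒜 ℬ hAB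
end

section
/- For every integer k ≥ 2 and every set system 𝒬 ⊆ 𝒫([k]) \ {[k]}, the hypergraph M_𝒬 satisfies: (a) e(M_𝒬) = 2^{|𝒬|}; (b) for every i ∈ [k], the i-th vertex class of M_𝒬 has size |V_i(M_𝒬)| = 2^{|𝒬| − deg_𝒬(i)}, where deg_𝒬(i) is the number of sets in 𝒬 containing i; in particular v(M_𝒬) = Σ_{i=1}^{k} 2^{|𝒬| − deg_𝒬(i)}; and (c) M_𝒬 is 𝒬-simple. -/
open Finset
open scoped Classical

/-
An edge of `M_𝒬` is indexed by a vector `a ∈ {0,1}^𝒬`, and its vertex in class `i` remembers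
exactly the coordinates `a_Q` with `i ∉ Q`. Since no `Q ∈ 𝒬` is all of `[k]`, every coordinate
is remembered by some vertex, so distinct vectors give distinct edges. If `a_Q ≠ b_Q`, the edges
of `a` and `b` can only share vertices in classes `r ∈ Q`; hence any enumeration of the edges
witnesses `𝒬`-simplicity.
-/

section QSimple

variable {k : ℕ} {𝒬 : Finset (Finset (Fin k))} {VF : Type}

theorem QSimple_of_forall_exists_ordering (EF : Finset (Finset VF))
    (h : ∀ f ∈ EF, ∃ x : Fin k → VF, Function.Injective x ∧ (∀ r, x r ∈ f) ∧
      ∀ g ∈ EF, g ≠ f → ∃ Q ∈ 𝒬, ∀ r, x r ∈ g → r ∈ Q) :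
    QSimple 𝒬 EF := by
  let e : Fin EF.card → Finset VF := fun j => (EF.equivFin.symm j).1
  have he_mem (j) : e j ∈ EF := (EF.equivFin.symm j).2
  refine ⟨e, he_mem, fun f hf => ⟨EF.equivFin ⟨f, hf⟩, by simp [e]⟩, fun j => ?_⟩
  obtain ⟨x, hx_inj, hx_mem, hx_sep⟩ := h (e j) (he_mem j)
  refine ⟨x, hx_inj, hx_mem, fun i hij => ?_⟩
  have hne : e i ≠ e j := fun hij' =>
    hij.ne (EF.equivFin.symm.injective (Subtype.ext hij'))
  obtain ⟨Q, hQ, hsep⟩ := hx_sep (e i) (he_mem i) hne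
  exact ⟨Q, hQ, fun r hr => hsep r hr.1⟩

end QSimple

section MQ

variable {k : ℕ} {𝒬 : Finset (Finset (Fin k))}

theorem Mvert_injective (a : {Q : Finset (Fin k) // Q ∈ 𝒬} → Bool) :
    Function.Injective (Mvert 𝒬 a) :=
  fun _ _ h => congrArg Sigma.fst h

theorem Mvert_eq_Mvert_iff {a b : {Q : Finset (Fin k) // Q ∈ 𝒬} → Bool} {i : Fin k} :
    Mvert 𝒬 a i = Mvert 𝒬 b i ↔ ∀ Q : {Q : Finset (Fin k) // Q ∈ 𝒬}, i ∉ Q.1 → a Q = b Q := by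
  simp only [Mvert, Sigma.mk.injEq, heq_eq_eq, true_and, funext_iff, Subtype.forall]
  exact ⟨fun h Q hQ hi => h Q ⟨hQ, hi⟩, fun h Q hQ => h Q hQ.1 hQ.2⟩

theorem Mvert_mem_MEdge_iff {a b : {Q : Finset (Fin k) // Q ∈ 𝒬} → Bool} {i : Fin k} :
    Mvert 𝒬 a i ∈ MEdge 𝒬 b ↔ Mvert 𝒬 a i = Mvert 𝒬 b i := by
  simp only [MEdge, Finset.mem_image, Finset.mem_univ, true_and]
  refine ⟨fun ⟨j, hj⟩ => ?_, fun h => ⟨i, h.symm⟩⟩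
  obtain rfl : j = i := congrArg Sigma.fst hj
  exact hj.symm

theorem mem_of_Mvert_mem_MEdge {a b : {Q : Finset (Fin k) // Q ∈ 𝒬} → Bool}
    {Q : {Q : Finset (Fin k) // Q ∈ 𝒬}} (hQ : a Q ≠ b Q) {r : Fin k}
    (hr : Mvert 𝒬 a r ∈ MEdge 𝒬 b) : r ∈ Q.1 := by
  by_contra hrQ
  exact hQ (Mvert_eq_Mvert_iff.mp (Mvert_mem_MEdge_iff.mp hr) Q hrQ)

theorem MEdge_injective (h𝒬 : Finset.univ ∉ 𝒬) : Function.Injective (MEdge 𝒬) := by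
  intro a b hab
  by_contra hne
  obtain ⟨Q, hQ⟩ := Function.ne_iff.mp hne
  obtain ⟨r, hr⟩ : ∃ r, r ∉ Q.1 := by
    by_contra! h
    exact h𝒬 (Finset.eq_univ_iff_forall.mpr h ▸ Q.2)
  have hmem : Mvert 𝒬 a r ∈ MEdge 𝒬 b := hab ▸ Finset.mem_image_of_mem _ (Finset.mem_univ r)
  exact hr (mem_of_Mvert_mem_MEdge hQ hmem)

theorem card_MEdges (h𝒬 : Finset.univ ∉ 𝒬) : (MEdges 𝒬).card = 2 ^ 𝒬.card := by
  rw [MEdges, Finset.card_image_of_injective _ (MEdge_injective h𝒬), Finset.card_univ,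
    Fintype.card_fun, Fintype.card_bool, Fintype.card_coe]

theorem card_MVertex_fiber (i : Fin k) :
    Fintype.card {v : MVertex k 𝒬 // v.1 = i} = 2 ^ (𝒬.card - degQ 𝒬 i) := by
  have hfilter : Finset.univ.filter (fun Q => Q ∈ 𝒬 ∧ i ∉ Q) = 𝒬.filter (fun Q => i ∉ Q) := by
    ext Q; simp
  have hsplit := Finset.card_filter_add_card_filter_not (s := 𝒬) (fun Q => i ∈ Q)
  rw [Fintype.card_congr (Equiv.sigmaSubtype i), Fintype.card_fun, Fintype.card_bool,
    Fintype.card_subtype, hfilter, degQ]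
  congr 1
  omega

theorem card_MVertex :
    Fintype.card (MVertex k 𝒬) = ∑ i : Fin k, 2 ^ (𝒬.card - degQ 𝒬 i) := by
  simp_rw [Fintype.card_sigma, ← card_MVertex_fiber, Fintype.card_congr (Equiv.sigmaSubtype _)]

theorem QSimple_MEdges : QSimple 𝒬 (MEdges 𝒬) := by
  refine QSimple_of_forall_exists_ordering _ fun f hf => ?_
  obtain ⟨a, -, rfl⟩ := Finset.mem_image.mp hf
  refine ⟨Mvert 𝒬 a, Mvert_injective a, fun r => Finset.mem_image_of_mem _ (Finset.mem_univ r),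
    fun g hg hne => ?_⟩
  obtain ⟨b, -, rfl⟩ := Finset.mem_image.mp hg
  obtain ⟨Q, hQ⟩ := Function.ne_iff.mp fun hab : a = b => hne (hab ▸ rfl)
  exact ⟨Q.1, Q.2, fun r hr => mem_of_Mvert_mem_MEdge hQ hr⟩

end MQ

theorem M_properties_general (k : ℕ) (𝒬 : Finset (Finset (Fin k)))
    (h𝒬 : Finset.univ ∉ 𝒬) :
    (MEdges 𝒬).card = 2 ^ 𝒬.card ∧
    (∀ i : Fin k,
      Fintype.card {v : MVertex k 𝒬 // v.1 = i} = 2 ^ (𝒬.card - degQ 𝒬 i)) ∧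
    Fintype.card (MVertex k 𝒬) = ∑ i : Fin k, 2 ^ (𝒬.card - degQ 𝒬 i) ∧
    QSimple 𝒬 (MEdges 𝒬) := by
  exact ⟨card_MEdges h𝒬, card_MVertex_fiber, card_MVertex, QSimple_MEdges⟩

/-- basic properties of `M_𝒬`: it has `2^{|𝒬|}` edges, its `i`-th
vertex class has `2^{|𝒬| - deg_𝒬(i)}` vertices, hence
`v(M_𝒬) = ∑_i 2^{|𝒬| - deg_𝒬(i)}`, and it is `𝒬`-simple. -/
theorem M_properties (k : ℕ) (hk : 2 ≤ k) (𝒬 : Finset (Finset (Fin k)))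
    (h𝒬 : Finset.univ ∉ 𝒬) :
    (MEdges 𝒬).card = 2 ^ 𝒬.card ∧
    (∀ i : Fin k,
      Fintype.card {v : MVertex k 𝒬 // v.1 = i} = 2 ^ (𝒬.card - degQ 𝒬 i)) ∧
    Fintype.card (MVertex k 𝒬) = ∑ i : Fin k, 2 ^ (𝒬.card - degQ 𝒬 i) ∧
    QSimple 𝒬 (MEdges 𝒬) :=
  M_properties_general k 𝒬 h𝒬
end
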